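/- arXiv:math/0606088 — 5 statements merged into one kernel-verified Lean document; each statement's English description precedes it below -/
import Mathlib

section
/- Let Ψ = (ψ_1,…,ψ_t) be a system of non-constant affine-linear forms on Z^d with all homogeneous coefficients and constant terms bounded in absolute value by L. Then for every prime p the local factor β_p := E_{n ∈ F_p^d} ∏_{i∈[t]} Λ_{Z_p}(ψ_i(n)) satisfies β_p = 1 + O_{t,d,L}(1/p), i.e. |β_p − 1| ≤ C(t,d,L)/p for some constant C(t,d,L). -/
/-- The local von Mangoldt function `Λ_{ℤ_q}(b) = q/φ(q)` if `gcd(b,q) = 1`, else `0`. -/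
noncomputable def localVonMangoldt (q : ℕ) (b : ℤ) : ℝ :=
  if Int.gcd b q = 1 then (q : ℝ) / (Nat.totient q : ℝ) else 0

/-- The local factor `β_q` of the system of affine-linear forms `ψ_i(n) = ∑_j A i j * n j + c i`. -/
noncomputable def localFactor (t d q : ℕ) (A : Fin t → Fin d → ℤ) (c : Fin t → ℤ) : ℝ :=
  (∑ n : Fin d → Fin q, ∏ i, localVonMangoldt q (∑ j, A i j * (n j : ℤ) + c i)) / (q : ℝ) ^ d

/-! For a prime `p`, `Λ_{ℤ_p}(b)` is `p/(p-1)` or `0` according as `p ∤ b` or `p ∣ b`, so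
`β_p = δ_p (p/(p-1))^t`, where `δ_p` is the proportion of `n ∈ 𝔽_p^d` at which no form vanishes
mod `p`. As `δ_p ≤ 1` and `(p/(p-1))^t ≤ 1 + 2^{t+1}/p`, the upper bound holds for every `p`.
For `p > L` each form has a coefficient that is a unit mod `p`, so it vanishes on a proportion
`1/p` of `𝔽_p^d` and the union bound gives `δ_p ≥ 1 - t/p`; for `p ≤ L`, `β_p ≥ 0` suffices. -/

open Finset

section AffineHyperplane

variable {K ι : Type*} [Field K] [Fintype K] [DecidableEq K] [Fintype ι] [DecidableEq ι]

theorem card_mul_card_filter_linear_add_eq_zero_le (a : ι → K) (b : K) {j₀ : ι} (ha : a j₀ ≠ 0) :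
    Fintype.card K * #{x : ι → K | ∑ j, a j * x j + b = 0} ≤
      Fintype.card K ^ Fintype.card ι := by
  -- on the hyperplane, the coordinate `j₀` is determined by the others
  have hle : #{x : ι → K | ∑ j, a j * x j + b = 0} ≤ Fintype.card ({j // j ≠ j₀} → K) := by
    refine card_le_card_of_injOn (t := univ) (fun x j => x j)
      (fun _ _ => mem_coe.2 (mem_univ _)) ?_
    intro x hx y hy hxy
    simp only [coe_filter, mem_univ, true_and, Set.mem_ofPred_eq] at hx hy
    have hoff : ∀ j ≠ j₀, x j = y j := fun j hj => congrFun hxy ⟨j, hj⟩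
    have hdiff : a j₀ * (x j₀ - y j₀) = 0 := by
      rw [← Fintype.sum_eq_single (f := fun j => a j * (x j - y j)) j₀
        fun j hj => by rw [hoff j hj, sub_self, mul_zero]]
      simp only [mul_sub, sum_sub_distrib]
      linear_combination hx - hy
    have hj₀ : x j₀ = y j₀ := sub_eq_zero.1 ((mul_eq_zero.1 hdiff).resolve_left ha)
    funext j
    by_cases hj : j = j₀
    · exact hj ▸ hj₀
    · exact hoff j hj
  rw [Fintype.card_fun, Fintype.card_subtype_compl, Fintype.card_subtype_eq] at hle
  calc Fintype.card K * #{x : ι → K | ∑ j, a j * x j + b = 0}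
      ≤ Fintype.card K * Fintype.card K ^ (Fintype.card ι - 1) := Nat.mul_le_mul_left _ hle
    _ = Fintype.card K ^ Fintype.card ι := by
      rw [← pow_succ', Nat.sub_add_cancel (Fintype.card_pos_iff.2 ⟨j₀⟩)]

end AffineHyperplane

def nonvanishingPoints {ι κ : Type*} [Fintype ι] [DecidableEq ι] [Fintype κ] (p : ℕ)
    (A : κ → ι → ℤ) (c : κ → ℤ) : Finset (ι → Fin p) :=
  {n : ι → Fin p | ∀ i, ((∑ j, A i j * (n j : ℤ) + c i : ℤ) : ZMod p) ≠ 0}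

section PrimeModulus

variable {ι κ : Type*} [Fintype ι] [DecidableEq ι] [Fintype κ] {p : ℕ} [Fact p.Prime]

theorem card_mul_card_filter_affine_zmod_eq_zero_le (a : ι → ℤ) (b : ℤ) {j₀ : ι}
    (ha : ¬ (p : ℤ) ∣ a j₀) :
    p * #{n : ι → Fin p | ((∑ j, a j * (n j : ℤ) + b : ℤ) : ZMod p) = 0} ≤ p ^ Fintype.card ι := by
  have hcast : Function.Injective fun k : Fin p => ((k : ℕ) : ZMod p) := by
    intro k m h
    simpa [ZMod.val_cast_of_lt k.isLt, ZMod.val_cast_of_lt m.isLt, Fin.ext_iff] using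
      congrArg ZMod.val h
  have hle : #{n : ι → Fin p | ((∑ j, a j * (n j : ℤ) + b : ℤ) : ZMod p) = 0} ≤
      #{x : ι → ZMod p | ∑ j, (a j : ZMod p) * x j + b = 0} := by
    refine card_le_card_of_injOn (fun n j => ((n j : ℕ) : ZMod p)) (fun n hn => ?_)
      (fun n _ m _ h => funext fun j => hcast (congrFun h j))
    simpa using hn
  calc p * #{n : ι → Fin p | ((∑ j, a j * (n j : ℤ) + b : ℤ) : ZMod p) = 0}
      ≤ Fintype.card (ZMod p) * #{x : ι → ZMod p | ∑ j, (a j : ZMod p) * x j + b = 0} := by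
        rw [ZMod.card]; exact Nat.mul_le_mul_left _ hle
    _ ≤ p ^ Fintype.card ι := by
        simpa [ZMod.card] using card_mul_card_filter_linear_add_eq_zero_le
          (fun j => (a j : ZMod p)) (b : ZMod p) ((ZMod.intCast_zmod_eq_zero_iff_dvd _ _).not.2 ha)

theorem card_mul_card_filter_exists_zmod_eq_zero_le (A : κ → ι → ℤ) (c : κ → ℤ)
    (hA : ∀ i, ∃ j, ¬ (p : ℤ) ∣ A i j) :
    p * #{n : ι → Fin p | ∃ i, ((∑ j, A i j * (n j : ℤ) + c i : ℤ) : ZMod p) = 0} ≤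
      Fintype.card κ * p ^ Fintype.card ι := by
  have hunion : ({n : ι → Fin p | ∃ i, ((∑ j, A i j * (n j : ℤ) + c i : ℤ) : ZMod p) = 0} :
      Finset (ι → Fin p)) =
      univ.biUnion fun i =>
        {n : ι → Fin p | ((∑ j, A i j * (n j : ℤ) + c i : ℤ) : ZMod p) = 0} := by
    ext; simp
  calc p * #{n : ι → Fin p | ∃ i, ((∑ j, A i j * (n j : ℤ) + c i : ℤ) : ZMod p) = 0}
      ≤ ∑ i, p * #{n : ι → Fin p | ((∑ j, A i j * (n j : ℤ) + c i : ℤ) : ZMod p) = 0} := by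
        rw [hunion, ← mul_sum]; exact Nat.mul_le_mul_left _ card_biUnion_le
    _ ≤ ∑ _i : κ, p ^ Fintype.card ι := sum_le_sum fun i _ =>
        card_mul_card_filter_affine_zmod_eq_zero_le _ _ (hA i).choose_spec
    _ = Fintype.card κ * p ^ Fintype.card ι := by simp

theorem one_sub_div_le_card_nonvanishingPoints_div (A : κ → ι → ℤ) (c : κ → ℤ)
    (hA : ∀ i, ∃ j, ¬ (p : ℤ) ∣ A i j) :
    1 - (Fintype.card κ : ℝ) / p ≤ #(nonvanishingPoints p A c) / (p : ℝ) ^ Fintype.card ι := by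
  have hsplit := card_filter_add_card_filter_not (s := (univ : Finset (ι → Fin p)))
    fun n => ∀ i, ((∑ j, A i j * (n j : ℤ) + c i : ℤ) : ZMod p) ≠ 0
  simp only [not_forall, not_not, card_univ, Fintype.card_fun, Fintype.card_fin] at hsplit
  have hbad := card_mul_card_filter_exists_zmod_eq_zero_le A c hA
  have hp : (0 : ℝ) < p := by exact_mod_cast (Fact.out : p.Prime).pos
  set S := #(nonvanishingPoints p A c)
  set Z := #{n : ι → Fin p | ∃ i, ((∑ j, A i j * (n j : ℤ) + c i : ℤ) : ZMod p) = 0}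
  have hsplitR : (S : ℝ) + Z = (p : ℝ) ^ Fintype.card ι := by exact_mod_cast hsplit
  have hbadR : (p : ℝ) * Z ≤ Fintype.card κ * (p : ℝ) ^ Fintype.card ι := by exact_mod_cast hbad
  have hZ : (Z : ℝ) / (p : ℝ) ^ Fintype.card ι ≤ Fintype.card κ / p := by
    rw [div_le_div_iff₀ (by positivity) hp]; linarith
  have hS : (S : ℝ) / (p : ℝ) ^ Fintype.card ι = 1 - Z / (p : ℝ) ^ Fintype.card ι := by
    field_simp; linarith
  linarith

end PrimeModulus

theorem pow_sub_one_le_of_le_two {x : ℝ} (h1 : 1 ≤ x) (h2 : x ≤ 2) (n : ℕ) :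
    x ^ n - 1 ≤ (2 ^ n - 1) * (x - 1) := by
  have h2n : ∑ i ∈ range n, (2 : ℝ) ^ i = 2 ^ n - 1 := by
    have h := geom_sum_mul (2 : ℝ) n
    norm_num at h
    exact h
  calc x ^ n - 1 = (∑ i ∈ range n, x ^ i) * (x - 1) := (geom_sum_mul x n).symm
    _ ≤ (∑ i ∈ range n, (2 : ℝ) ^ i) * (x - 1) := by gcongr
    _ = (2 ^ n - 1) * (x - 1) := by rw [h2n]

theorem div_sub_one_pow_le {x : ℝ} (hx : 2 ≤ x) (n : ℕ) :
    (x / (x - 1)) ^ n ≤ 1 + 2 ^ (n + 1) / x := by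
  have hx1 : 0 < x - 1 := by linarith
  have hsub : x / (x - 1) - 1 = 1 / (x - 1) := by field_simp; ring
  have hle : 1 / (x - 1) ≤ 2 / x := by rw [div_le_div_iff₀ hx1 (by linarith)]; linarith
  have hpow := pow_sub_one_le_of_le_two (x := x / (x - 1))
    (by rw [le_div_iff₀ hx1]; linarith) (by rw [div_le_iff₀ hx1]; linarith) n
  rw [hsub] at hpow
  have h2n : (1 : ℝ) ≤ 2 ^ n := one_le_pow₀ (by norm_num)
  calc (x / (x - 1)) ^ n ≤ 1 + (2 ^ n - 1) * (1 / (x - 1)) := by linarith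
    _ ≤ 1 + 2 ^ n * (2 / x) := by gcongr; linarith
    _ = 1 + 2 ^ (n + 1) / x := by ring

theorem localVonMangoldt_nonneg (q : ℕ) (b : ℤ) : 0 ≤ localVonMangoldt q b := by
  unfold localVonMangoldt; split_ifs <;> positivity

theorem localVonMangoldt_of_prime {p : ℕ} [Fact p.Prime] (b : ℤ) :
    localVonMangoldt p b = if (b : ZMod p) = 0 then 0 else (p : ℝ) / (p - 1) := by
  have hp : p.Prime := Fact.out
  have hcop : Int.gcd b p = 1 ↔ (b : ZMod p) ≠ 0 := by
    rw [← Int.isCoprime_iff_gcd_eq_one, isCoprime_comm,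
      (Nat.prime_iff_prime_int.mp hp).coprime_iff_not_dvd, Ne, ZMod.intCast_zmod_eq_zero_iff_dvd]
  rw [localVonMangoldt, Nat.totient_prime hp, Nat.cast_sub hp.one_le, Nat.cast_one]
  by_cases hb : (b : ZMod p) = 0
  · rw [if_neg (hcop.not.2 (not_not.2 hb)), if_pos hb]
  · rw [if_pos (hcop.2 hb), if_neg hb]

theorem prod_localVonMangoldt_of_prime {ι : Type*} [Fintype ι] {p : ℕ} [Fact p.Prime]
    (b : ι → ℤ) :
    ∏ i, localVonMangoldt p (b i) =
      if ∀ i, (b i : ZMod p) ≠ 0 then ((p : ℝ) / (p - 1)) ^ Fintype.card ι else 0 := by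
  simp_rw [localVonMangoldt_of_prime]
  split_ifs with h
  · rw [prod_congr rfl fun i _ => if_neg (h i), prod_const, card_univ]
  · obtain ⟨i, hi⟩ := not_forall_not.1 h
    exact prod_eq_zero (mem_univ i) (if_pos hi)

section LocalFactor

variable {t d p : ℕ} [Fact p.Prime] (A : Fin t → Fin d → ℤ) (c : Fin t → ℤ)

theorem localFactor_eq_of_prime :
    localFactor t d p A c =
      #(nonvanishingPoints p A c) / (p : ℝ) ^ d * ((p : ℝ) / (p - 1)) ^ t := by
  unfold localFactor
  simp_rw [prod_localVonMangoldt_of_prime, Fintype.card_fin]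
  rw [← sum_filter, sum_const, nsmul_eq_mul, nonvanishingPoints, div_mul_eq_mul_div]
  congr

theorem localFactor_nonneg (q : ℕ) : 0 ≤ localFactor t d q A c :=
  div_nonneg (sum_nonneg fun _ _ => prod_nonneg fun _ _ => localVonMangoldt_nonneg _ _)
    (by positivity)

theorem localFactor_le_of_prime : localFactor t d p A c ≤ 1 + 2 ^ (t + 1) / p := by
  have hp : (2 : ℝ) ≤ p := by exact_mod_cast (Fact.out : p.Prime).two_le
  have hdens : (#(nonvanishingPoints p A c) : ℝ) / (p : ℝ) ^ d ≤ 1 := by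
    rw [div_le_one (by positivity)]
    exact_mod_cast (card_le_univ _).trans_eq (by simp)
  rw [localFactor_eq_of_prime]
  exact (mul_le_of_le_one_left (pow_nonneg (div_nonneg (by positivity) (by linarith)) t)
    hdens).trans (div_sub_one_pow_le hp t)

theorem one_sub_div_le_localFactor (hA : ∀ i, ∃ j, ¬ (p : ℤ) ∣ A i j) :
    1 - (t : ℝ) / p ≤ localFactor t d p A c := by
  have hp : (2 : ℝ) ≤ p := by exact_mod_cast (Fact.out : p.Prime).two_le
  have hdens := one_sub_div_le_card_nonvanishingPoints_div A c hA
  rw [Fintype.card_fin, Fintype.card_fin] at hdens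
  rw [localFactor_eq_of_prime]
  calc 1 - (t : ℝ) / p ≤ #(nonvanishingPoints p A c) / (p : ℝ) ^ d := hdens
    _ ≤ _ := le_mul_of_one_le_right (by positivity)
        (one_le_pow₀ (by rw [le_div_iff₀ (by linarith)]; linarith))

end LocalFactor

theorem localFactor_one_add_O_inv_general (t d L : ℕ) :
    ∃ C : ℝ, 0 < C ∧ ∀ (A : Fin t → Fin d → ℤ) (c : Fin t → ℤ),
      (∀ i, A i ≠ 0) → (∀ i j, |A i j| ≤ (L : ℤ)) → (∀ i, |c i| ≤ (L : ℤ)) →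
      ∀ p : ℕ, p.Prime → |localFactor t d p A c - 1| ≤ C / (p : ℝ) := by
  refine ⟨2 ^ (t + 1) + t + L, by positivity, fun A c hA hAL _ p hp => ?_⟩
  have := Fact.mk hp
  have hp0 : (0 : ℝ) < p := by exact_mod_cast hp.pos
  have hC : ∀ x : ℝ, x ≤ 2 ^ (t + 1) + t + L → x / p ≤ (2 ^ (t + 1) + t + L) / p :=
    fun x hx => div_le_div_of_nonneg_right hx hp0.le
  have h2 : (0 : ℝ) ≤ 2 ^ (t + 1) := by positivity
  have ht : (0 : ℝ) ≤ t := t.cast_nonneg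
  have hL : (0 : ℝ) ≤ L := L.cast_nonneg
  rw [abs_le, neg_le_sub_iff_le_add]
  refine ⟨?_, by linarith [localFactor_le_of_prime (p := p) A c, hC (2 ^ (t + 1)) (by linarith)]⟩
  rcases le_or_gt p L with hpL | hLp
  · have hLdiv : (1 : ℝ) ≤ L / p := by rw [one_le_div hp0]; exact_mod_cast hpL
    linarith [localFactor_nonneg A c p, hC L (by linarith)]
  · have hA' : ∀ i, ∃ j, ¬ (p : ℤ) ∣ A i j := fun i => by
      obtain ⟨j, hj⟩ := Function.ne_iff.mp (hA i)
      exact ⟨j, fun hdvd => hj (Int.eq_zero_of_abs_lt_dvd hdvd (by linarith [hAL i j]))⟩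
    linarith [one_sub_div_le_localFactor A c hA', hC t (by linarith)]

/-- For any system of non-constant affine-linear forms with coefficients and constant terms
bounded by `L`, the local factor satisfies `β_p = 1 + O_{t,d,L}(1/p)` for every prime `p`. -/
theorem localFactor_one_add_O_inv (t d L : ℕ) (ht : 1 ≤ t) (hd : 1 ≤ d) (hL : 1 ≤ L) :
    ∃ C : ℝ, 0 < C ∧ ∀ (A : Fin t → Fin d → ℤ) (c : Fin t → ℤ),
      (∀ i, A i ≠ 0) → (∀ i j, |A i j| ≤ (L : ℤ)) → (∀ i, |c i| ≤ (L : ℤ)) →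
      ∀ p : ℕ, p.Prime → |localFactor t d p A c - 1| ≤ C / (p : ℝ) :=
  localFactor_one_add_O_inv_general t d L
end

section
/- Let Ψ = (ψ_1,…,ψ_t) be a system of non-constant affine-linear forms on Z^d, no two of which are rational multiples of each other. If no two of the forms ψ_i are affinely related (i.e. no two of the homogeneous parts ψ̇_i are parallel) and the coefficients are bounded by L, then for every prime p the local factor β_p satisfies β_p = 1 + O_{t,d,L}(1/p²). -/
open Finset

section Aux

variable {F : Type*} [Field F] [Fintype F] [DecidableEq F]

/-- The linear form `v ↦ ∑ j, a j * v j` as a linear map. -/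
noncomputable def lform (d : ℕ) (a : Fin d → F) : ((Fin d → F) →ₗ[F] F) :=
  ∑ j, a j • LinearMap.proj j

omit [Fintype F] [DecidableEq F] in
lemma lform_apply (d : ℕ) (a v : Fin d → F) : lform d a v = ∑ j, a j * v j := by
  simp [lform, LinearMap.proj]

omit [Fintype F] [DecidableEq F] in
lemma lform_single (d : ℕ) (a : Fin d → F) (j : Fin d) (x : F) :
    lform d a (Pi.single j x) = a j * x := by
  rw [lform_apply]
  rw [Finset.sum_eq_single j]
  · simp
  · intro k _ hk; simp [Pi.single_eq_of_ne hk]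
  · simp

omit [Fintype F] [DecidableEq F] in
lemma lform_surj (d : ℕ) (a : Fin d → F) (j : Fin d) (hj : a j ≠ 0) :
    Function.Surjective (lform d a) := by
  intro y
  exact ⟨Pi.single j (y / a j), by rw [lform_single]; field_simp⟩

omit [Fintype F] [DecidableEq F] in
lemma lform_pair_surj (d : ℕ) (a b : Fin d → F) (k l : Fin d)
    (hD : a k * b l - a l * b k ≠ 0) :
    Function.Surjective ((lform d a).prod (lform d b)) := by
  rintro ⟨x, y⟩
  set D := a k * b l - a l * b k
  refine ⟨Pi.single k ((x * b l - y * a l) / D) + Pi.single l ((y * a k - x * b k) / D), ?_⟩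
  have h1 : lform d a (Pi.single k ((x * b l - y * a l) / D)
      + Pi.single l ((y * a k - x * b k) / D)) = x := by
    rw [map_add, lform_single, lform_single]
    field_simp
    ring
  have h2 : lform d b (Pi.single k ((x * b l - y * a l) / D)
      + Pi.single l ((y * a k - x * b k) / D)) = y := by
    rw [map_add, lform_single, lform_single]
    field_simp
    ring
  simp [LinearMap.prod_apply, h1, h2]

omit [Fintype F] [DecidableEq F] in
/-- all nonempty fibers of a linear map have the same cardinality -/
lemma card_fiber_eq {M N : Type*} [AddCommGroup M] [AddCommGroup N] [Module F M] [Module F N]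
    [Fintype M] [DecidableEq M] [DecidableEq N] (f : M →ₗ[F] N) (y₁ y₂ : N)
    (h1 : ∃ v, f v = y₁) (h2 : ∃ v, f v = y₂) :
    (univ.filter (fun v => f v = y₁)).card = (univ.filter (fun v => f v = y₂)).card := by
  obtain ⟨v₁, hv₁⟩ := h1
  obtain ⟨v₂, hv₂⟩ := h2
  apply Finset.card_bij (fun v _ => v - v₁ + v₂)
  · intro v hv
    simp only [mem_filter, mem_univ, true_and] at hv ⊢
    simp [map_add, map_sub, hv, hv₁, hv₂]
  · intro u hu w hw h
    simpa using h
  · intro w hw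
    simp only [mem_filter, mem_univ, true_and] at hw
    exact ⟨w - v₂ + v₁, by simp [map_add, map_sub, hw, hv₁, hv₂], by abel⟩

omit [Fintype F] [DecidableEq F] in
lemma card_fiber_mul {M N : Type*} [AddCommGroup M] [AddCommGroup N] [Module F M] [Module F N]
    [Fintype M] [Fintype N] [DecidableEq M] [DecidableEq N] (f : M →ₗ[F] N)
    (hf : Function.Surjective f) (y : N) :
    (univ.filter (fun v => f v = y)).card * Fintype.card N = Fintype.card M := by
  have h := Finset.card_eq_sum_card_fiberwise (f := f) (s := univ) (t := univ)
    (fun v _ => mem_univ _)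
  have heq : ∀ z : N, (univ.filter (fun v => f v = z)).card
      = (univ.filter (fun v => f v = y)).card := fun z =>
    card_fiber_eq f z y (hf z) (hf y)
  rw [Finset.card_univ] at h
  rw [Fintype.card_eq_sum_ones (α := N)]
  rw [h, Finset.sum_congr rfl (fun z _ => heq z)]
  simp [mul_comm]

/-- Bonferroni's second inequality. -/
lemma bonferroni {ι Ω : Type*} [Fintype ι] [DecidableEq ι] [DecidableEq Ω]
    (B : ι → Finset Ω) :
    ∑ i, (B i).card ≤ (univ.biUnion B).card
      + ∑ p ∈ (univ : Finset ι).offDiag, ((B p.1) ∩ (B p.2)).card := by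
  classical
  set U := univ.biUnion B with hU
  set m : Ω → ℕ := fun x => (univ.filter (fun i => x ∈ B i)).card with hm
  have hsub : ∀ i, B i ⊆ U := fun i => Finset.subset_biUnion_of_mem B (mem_univ i)
  have hcard : ∀ i, (B i).card = ∑ x ∈ U, if x ∈ B i then 1 else 0 := by
    intro i
    rw [← Finset.sum_filter]
    have : U.filter (fun x => x ∈ B i) = B i := by
      ext x; simp only [mem_filter]
      exact ⟨fun h => h.2, fun h => ⟨hsub i h, h⟩⟩
    simp [this]
  have h1 : ∑ i, (B i).card = ∑ x ∈ U, m x := by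
    simp_rw [hcard]
    rw [Finset.sum_comm]
    refine Finset.sum_congr rfl (fun x _ => ?_)
    rw [hm]
    exact (Finset.card_filter _ _).symm
  have hcard2 : ∀ q : ι × ι, ((B q.1) ∩ (B q.2)).card
      = ∑ x ∈ U, if x ∈ B q.1 ∧ x ∈ B q.2 then 1 else 0 := by
    intro q
    rw [← Finset.sum_filter]
    have : U.filter (fun x => x ∈ B q.1 ∧ x ∈ B q.2) = B q.1 ∩ B q.2 := by
      ext x; simp only [mem_filter, mem_inter]
      exact ⟨fun h => h.2, fun h => ⟨hsub q.1 h.1, h⟩⟩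
    simp [this]
  have h2 : ∑ p ∈ (univ : Finset ι).offDiag, ((B p.1) ∩ (B p.2)).card
      = ∑ x ∈ U, m x * (m x - 1) := by
    simp_rw [hcard2]
    rw [Finset.sum_comm]
    congr 1; ext x
    rw [← Finset.sum_filter]
    have hfil : ((univ : Finset ι).offDiag.filter (fun q => x ∈ B q.1 ∧ x ∈ B q.2))
        = (univ.filter (fun i => x ∈ B i)).offDiag := by
      ext q
      simp only [mem_filter, Finset.mem_offDiag, mem_univ, true_and]
      tauto
    rw [hfil, Finset.sum_const, smul_eq_mul, mul_one, Finset.offDiag_card]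
    rw [hm]
    simp only []
    generalize (univ.filter (fun i => x ∈ B i)).card = n
    cases n with
    | zero => simp
    | succ k => simp [Nat.succ_mul, Nat.mul_succ]
  have hm1 : ∀ x ∈ U, 1 ≤ m x := by
    intro x hx
    rw [hU, mem_biUnion] at hx
    obtain ⟨i, _, hi⟩ := hx
    rw [hm]
    exact Finset.card_pos.mpr ⟨i, by simp [hi]⟩
  have key : ∀ x ∈ U, m x ≤ 1 + m x * (m x - 1) := by
    intro x hx
    have := hm1 x hx
    have h2 : m x - 1 ≤ m x * (m x - 1) := Nat.le_mul_of_pos_left _ this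
    omega
  calc ∑ i, (B i).card = ∑ x ∈ U, m x := h1
    _ ≤ ∑ x ∈ U, (1 + m x * (m x - 1)) := Finset.sum_le_sum key
    _ = U.card + ∑ x ∈ U, m x * (m x - 1) := by
        rw [Finset.sum_add_distrib, Finset.sum_const, smul_eq_mul, mul_one]
    _ = U.card + ∑ p ∈ (univ : Finset ι).offDiag, ((B p.1) ∩ (B p.2)).card := by rw [h2]

/-- Weak quadratic upper Bernoulli bound. -/
lemma pow_one_add_le (t : ℕ) (ε : ℝ) (hε : 0 ≤ ε) (h : (t : ℝ) * ε ≤ 1) :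
    (1 + ε) ^ t ≤ 1 + t * ε + (t : ℝ) ^ 2 * ε ^ 2 := by
  induction t with
  | zero => simp
  | succ n ih =>
    have hn1 : ((n : ℝ) + 1) * ε ≤ 1 := by push_cast at h; linarith
    have hn : (n : ℝ) * ε ≤ 1 := by nlinarith
    have h2 := ih hn
    have h3 : (1 + ε) ^ (n + 1) = (1 + ε) ^ n * (1 + ε) := pow_succ _ _
    have h4 : (1 + ε) ^ n * (1 + ε) ≤ (1 + n * ε + (n : ℝ) ^ 2 * ε ^ 2) * (1 + ε) :=
      mul_le_mul_of_nonneg_right h2 (by linarith)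
    rw [h3]
    push_cast
    have hn2 : (n : ℝ) ^ 2 * ε ≤ (n : ℝ) := by nlinarith
    have h5 : 0 ≤ ((n : ℝ) + 1 - (n : ℝ) ^ 2 * ε) * ε ^ 2 :=
      mul_nonneg (by nlinarith) (sq_nonneg ε)
    nlinarith [h4, h5]

end Aux

def finZModEquiv (p : ℕ) [NeZero p] : Fin p ≃ ZMod p where
  toFun k := ((k : ℕ) : ZMod p)
  invFun z := ⟨z.val, ZMod.val_lt z⟩
  left_inv k := by
    ext
    simp [ZMod.val_cast_of_lt k.isLt]
  right_inv z := ZMod.natCast_rightInverse z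

lemma localVonMangoldt_prime (p : ℕ) (hp : p.Prime) (b : ℤ) :
    localVonMangoldt p b = if (b : ZMod p) ≠ 0 then (p : ℝ) / ((p : ℝ) - 1) else 0 := by
  have h1 : Int.gcd b p = 1 ↔ ¬ ((b : ZMod p) = 0) := by
    rw [ZMod.intCast_zmod_eq_zero_iff_dvd]
    unfold Int.gcd
    rw [Int.natAbs_natCast]
    have : b.natAbs.gcd p = Nat.gcd p b.natAbs := Nat.gcd_comm _ _
    rw [this]
    show Nat.Coprime p b.natAbs ↔ _
    rw [Nat.Prime.coprime_iff_not_dvd hp]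
    rw [Int.natCast_dvd]
  have h2 : (Nat.totient p : ℝ) = (p : ℝ) - 1 := by
    rw [Nat.totient_prime hp]
    have := hp.one_lt
    push_cast [Nat.cast_sub hp.one_lt.le]
    ring
  unfold localVonMangoldt
  rw [h2]
  by_cases h : (b : ZMod p) = 0 <;> simp [h, h1]

lemma localFactor_eq_card (t d p : ℕ) (hp : p.Prime) (A : Fin t → Fin d → ℤ) (c : Fin t → ℤ) :
    haveI : NeZero p := ⟨hp.ne_zero⟩
    localFactor t d p A c = ((p : ℝ) / ((p : ℝ) - 1)) ^ t *
      ((Finset.univ.filter (fun v : Fin d → ZMod p =>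
        ∀ i, (∑ j, (A i j : ZMod p) * v j + (c i : ZMod p)) ≠ 0)).card : ℝ) / (p : ℝ) ^ d := by
  haveI : NeZero p := ⟨hp.ne_zero⟩
  classical
  set r : ℝ := (p : ℝ) / ((p : ℝ) - 1) with hr
  set P : (Fin d → ZMod p) → Prop := fun v =>
    ∀ i, (∑ j, (A i j : ZMod p) * v j + (c i : ZMod p)) ≠ 0 with hP
  unfold localFactor
  have hterm : ∀ n : Fin d → Fin p,
      (∏ i, localVonMangoldt p (∑ j, A i j * ((n j : ℕ) : ℤ) + c i))
      = if P (fun j => (((n j : ℕ) : ZMod p))) then r ^ t else 0 := by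
    intro n
    have hcast : ∀ i, (((∑ j, A i j * ((n j : ℕ) : ℤ) + c i : ℤ)) : ZMod p)
        = ∑ j, (A i j : ZMod p) * ((n j : ℕ) : ZMod p) + (c i : ZMod p) := by
      intro i
      push_cast
      ring
    rw [Finset.prod_congr rfl (fun i _ => localVonMangoldt_prime p hp _)]
    by_cases h : P (fun j => (((n j : ℕ) : ZMod p)))
    · rw [if_pos h]
      rw [Finset.prod_congr rfl (fun i _ => ?_), Finset.prod_const, Finset.card_univ,
        Fintype.card_fin]
      rw [if_pos]
      rw [hcast i]
      exact h i
    · rw [if_neg h]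
      simp only [hP, not_forall, not_not] at h
      obtain ⟨i, hi⟩ := h
      apply Finset.prod_eq_zero (Finset.mem_univ i)
      rw [if_neg]
      rw [hcast i]
      exact not_not.mpr hi
  rw [Finset.sum_congr rfl (fun n _ => hterm n)]
  have hsum : (∑ n : Fin d → Fin p, if P (fun j => (((n j : ℕ) : ZMod p))) then r ^ t else 0)
      = ∑ v : Fin d → ZMod p, if P v then r ^ t else 0 := by
    apply Fintype.sum_equiv (Equiv.piCongrRight (fun _ => finZModEquiv p))
    intro n
    rfl
  rw [hsum, Finset.sum_ite, Finset.sum_const, Finset.sum_const_zero, add_zero, nsmul_eq_mul]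
  simp only [hP]
  ring

set_option maxHeartbeats 1000000 in
/-- If no two of the (non-constant) forms have parallel homogeneous parts (no two forms are
affinely related), and the coefficients are bounded by `L`, then `β_p = 1 + O_{t,d,L}(1/p²)`
for every prime `p`. -/
theorem localFactor_one_add_O_inv_sq (t d L : ℕ) (ht : 1 ≤ t) (hd : 1 ≤ d) (hL : 1 ≤ L) :
    ∃ C : ℝ, 0 < C ∧ ∀ (A : Fin t → Fin d → ℤ) (c : Fin t → ℤ),
      (∀ i, A i ≠ 0) → (∀ i j, |A i j| ≤ (L : ℤ)) → (∀ i, |c i| ≤ (L : ℤ)) →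
      (∀ i j, i ≠ j → ∀ a b : ℚ,
        (∀ k, a * (A i k : ℚ) = b * (A j k : ℚ)) → a = 0 ∧ b = 0) →
      ∀ p : ℕ, p.Prime → |localFactor t d p A c - 1| ≤ C / (p : ℝ) ^ 2 := by
  classical
  refine ⟨((2:ℝ)^t + 1 + 16*(t:ℝ)^2) * ((2*(L:ℝ)^2 + 2*(t:ℝ) + 2))^2, by positivity, ?_⟩
  intro A c hA hAL hcL hpar p hp
  haveI : NeZero p := ⟨hp.ne_zero⟩
  haveI : Fact p.Prime := ⟨hp⟩
  set P0 : ℝ := 2*(L:ℝ)^2 + 2*(t:ℝ) + 2 with hP0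
  set C : ℝ := ((2:ℝ)^t + 1 + 16*(t:ℝ)^2) * P0^2 with hC
  set Q : ℝ := (p : ℝ) with hQdef
  have hQ2 : (2:ℝ) ≤ Q := by rw [hQdef]; exact_mod_cast hp.two_le
  have hQ0 : (0:ℝ) < Q := by linarith
  have ht1 : (1:ℝ) ≤ (t:ℝ) := by exact_mod_cast ht
  have hL1 : (1:ℝ) ≤ (L:ℝ) := by exact_mod_cast hL
  rw [localFactor_eq_card t d p hp A c]
  set good := Finset.univ.filter (fun v : Fin d → ZMod p =>
        ∀ i, (∑ j, (A i j : ZMod p) * v j + (c i : ZMod p)) ≠ 0) with hgood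
  set N : ℝ := (good.card : ℝ) with hN
  set r : ℝ := Q / (Q - 1) with hr
  have hcardF : (Fintype.card (Fin d → ZMod p) : ℝ) = Q ^ d := by
    simp [ZMod.card, hQdef]
  have hNle : N ≤ Q ^ d := by
    rw [hN, ← hcardF, ← Finset.card_univ]
    exact_mod_cast Finset.card_filter_le _ _
  have hN0 : (0:ℝ) ≤ N := Nat.cast_nonneg _
  have hrpos : (0:ℝ) < r := div_pos hQ0 (by linarith)
  have hr2 : r ≤ 2 := by
    rw [hr, div_le_iff₀ (by linarith)]; linarith
  have hQd0 : (0:ℝ) < Q ^ d := pow_pos hQ0 d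
  have hbeta0 : (0:ℝ) ≤ r ^ t * N / Q ^ d := by positivity
  have hbeta2 : r ^ t * N / Q ^ d ≤ 2 ^ t := by
    rw [div_le_iff₀ hQd0]
    calc r ^ t * N ≤ 2 ^ t * Q ^ d := by
          apply mul_le_mul (pow_le_pow_left₀ hrpos.le hr2 t) hNle hN0 (by positivity)
      _ = 2 ^ t * Q ^ d := rfl
  by_cases hbig : P0 ≤ Q
  swap
  · -- small primes: trivial bound
    push_neg at hbig
    have h2t : (0:ℝ) < 2 ^ t := by positivity
    have h1 : |r ^ t * N / Q ^ d - 1| ≤ 2 ^ t + 1 := by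
      rw [abs_le]; constructor <;> linarith
    have hP0pos : (0:ℝ) < P0 := by positivity
    have h2 : (2:ℝ) ^ t + 1 ≤ C / Q ^ 2 := by
      rw [le_div_iff₀ (by positivity)]
      have hQP : Q ^ 2 ≤ P0 ^ 2 := by nlinarith
      have h16 : (0:ℝ) ≤ 16 * (t:ℝ)^2 := by positivity
      calc ((2:ℝ) ^ t + 1) * Q ^ 2 ≤ ((2:ℝ) ^ t + 1) * P0 ^ 2 := by
            apply mul_le_mul_of_nonneg_left hQP (by positivity)
        _ ≤ C := by
            rw [hC]
            apply mul_le_mul_of_nonneg_right _ (sq_nonneg P0)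
            linarith
    linarith [h1, h2]
  · -- large primes
    have hbig' : 2*(L:ℝ)^2 + 2*(t:ℝ) + 2 ≤ (p:ℝ) := by rw [← hQdef, ← hP0]; exact hbig
    have hLp : (L:ℤ) < (p:ℤ) := by
      have h' : (L:ℝ) < (p:ℝ) := by nlinarith
      exact_mod_cast h'
    have hL2p : 2*(L:ℤ)^2 < (p:ℤ) := by
      have h' : (2*(L:ℝ)^2) < (p:ℝ) := by nlinarith
      have h'' : ((2*(L:ℤ)^2 : ℤ) : ℝ) < ((p:ℤ) : ℝ) := by push_cast; linarith
      exact_mod_cast h''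
    have hLpZ : ∀ m : ℤ, m ≠ 0 → |m| ≤ (L:ℤ) → ((m : ZMod p) ≠ 0) := by
      intro m hm hmL h0
      rw [ZMod.intCast_zmod_eq_zero_iff_dvd] at h0
      have h1 : (p:ℤ) ≤ |m| := Int.le_of_dvd (abs_pos.mpr hm) ((dvd_abs _ _).mpr h0)
      linarith
    have hL2pZ : ∀ m : ℤ, m ≠ 0 → |m| ≤ 2*(L:ℤ)^2 → ((m : ZMod p) ≠ 0) := by
      intro m hm hmL h0
      rw [ZMod.intCast_zmod_eq_zero_iff_dvd] at h0
      have h1 : (p:ℤ) ≤ |m| := Int.le_of_dvd (abs_pos.mpr hm) ((dvd_abs _ _).mpr h0)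
      linarith
    -- each row has a unit coefficient mod p
    have hrow : ∀ i, ∃ j, ((A i j : ZMod p)) ≠ 0 := by
      intro i
      obtain ⟨j, hj⟩ := Function.ne_iff.mp (hA i)
      exact ⟨j, hLpZ _ hj (hAL i j)⟩
    -- each pair of rows has an invertible 2x2 minor mod p
    have hpairminor : ∀ i j, i ≠ j →
        ∃ k l, ((A i k * A j l - A i l * A j k : ℤ) : ZMod p) ≠ 0 := by
      intro i j hij
      have hz : ∃ k l, (A i k * A j l - A i l * A j k : ℤ) ≠ 0 := by
        by_contra hcon
        push_neg at hcon
        obtain ⟨k₀, hk₀⟩ := Function.ne_iff.mp (hA i)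
        have hb := (hpar i j hij ((A j k₀ : ℤ) : ℚ) ((A i k₀ : ℤ) : ℚ) ?_).2
        · exact hk₀ (by exact_mod_cast hb)
        · intro k
          have h2 : ((A i k * A j k₀ - A i k₀ * A j k : ℤ) : ℚ) = 0 := by
            rw [hcon k k₀]; simp
          push_cast at h2
          linarith
      obtain ⟨k, l, hkl⟩ := hz
      refine ⟨k, l, hL2pZ _ hkl ?_⟩
      have b1 : |A i k * A j l| ≤ (L:ℤ)^2 := by
        rw [abs_mul]
        calc |A i k| * |A j l| ≤ (L:ℤ) * (L:ℤ) :=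
              mul_le_mul (hAL i k) (hAL j l) (abs_nonneg _) (by positivity)
          _ = (L:ℤ)^2 := by ring
      have b2 : |A i l * A j k| ≤ (L:ℤ)^2 := by
        rw [abs_mul]
        calc |A i l| * |A j k| ≤ (L:ℤ) * (L:ℤ) :=
              mul_le_mul (hAL i l) (hAL j k) (abs_nonneg _) (by positivity)
          _ = (L:ℤ)^2 := by ring
      calc |A i k * A j l - A i l * A j k| ≤ |A i k * A j l| + |A i l * A j k| := abs_sub _ _
        _ ≤ 2*(L:ℤ)^2 := by linarith
    -- the bad sets
    set Bset : Fin t → Finset (Fin d → ZMod p) := fun i =>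
      Finset.univ.filter (fun v => ∑ j, (A i j : ZMod p) * v j + (c i : ZMod p) = 0) with hBset
    have hcount1 : ∀ i, ((Bset i).card : ℝ) * Q = Q ^ d := by
      intro i
      obtain ⟨j, hj⟩ := hrow i
      have hs := card_fiber_mul (F := ZMod p) (lform d (fun k => (A i k : ZMod p)))
        (lform_surj d _ j hj) (-(c i : ZMod p))
      have hBeq : Bset i = Finset.univ.filter
          (fun v => lform d (fun k => (A i k : ZMod p)) v = -(c i : ZMod p)) := by
        rw [hBset]
        apply Finset.filter_congr
        intro v _
        rw [lform_apply]
        constructor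
        · intro h; rw [eq_neg_iff_add_eq_zero]; exact h
        · intro h; rw [eq_neg_iff_add_eq_zero] at h; exact h
      rw [← hBeq, ZMod.card] at hs
      have hs' : (((Bset i).card * p : ℕ) : ℝ) = ((Fintype.card (Fin d → ZMod p) : ℕ) : ℝ) := by
        exact_mod_cast congrArg (Nat.cast : ℕ → ℝ) hs
      rw [hcardF] at hs'
      rw [hQdef]
      push_cast at hs'
      linarith only [hs']
    have hcount2 : ∀ i j, i ≠ j → (((Bset i ∩ Bset j).card : ℝ)) * Q ^ 2 = Q ^ d := by
      intro i j hij
      obtain ⟨k, l, hkl⟩ := hpairminor i j hij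
      have hminor : (A i k : ZMod p) * (A j l : ZMod p)
          - (A i l : ZMod p) * (A j k : ZMod p) ≠ 0 := by
        intro h0
        apply hkl
        push_cast
        rw [sub_eq_zero] at h0 ⊢
        exact h0
      have hs := card_fiber_mul (F := ZMod p)
        ((lform d (fun m => (A i m : ZMod p))).prod (lform d (fun m => (A j m : ZMod p))))
        (lform_pair_surj d _ _ k l hminor) (-(c i : ZMod p), -(c j : ZMod p))
      have hBeq : Bset i ∩ Bset j = Finset.univ.filter
          (fun v => ((lform d (fun m => (A i m : ZMod p))).prod
            (lform d (fun m => (A j m : ZMod p)))) v = (-(c i : ZMod p), -(c j : ZMod p))) := by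
        ext v
        simp only [hBset, Finset.mem_inter, Finset.mem_filter, Finset.mem_univ, true_and,
          LinearMap.prod_apply, Function.prod, Prod.mk.injEq, lform_apply]
        rw [eq_neg_iff_add_eq_zero, eq_neg_iff_add_eq_zero]
      have hcard2 : (Fintype.card (ZMod p × ZMod p)) = p ^ 2 := by
        simp [ZMod.card]; ring
      rw [← hBeq, hcard2] at hs
      have hs' : (((Bset i ∩ Bset j).card * p ^ 2 : ℕ) : ℝ)
          = ((Fintype.card (Fin d → ZMod p) : ℕ) : ℝ) := by
        exact_mod_cast congrArg (Nat.cast : ℕ → ℝ) hs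
      rw [hcardF] at hs'
      rw [hQdef]
      push_cast at hs'
      linarith only [hs']
    -- cardinality of the good set via the union bound
    have hcomp : good = (Finset.univ.biUnion Bset)ᶜ := by
      ext v
      simp only [hgood, hBset, Finset.mem_compl, Finset.mem_biUnion, Finset.mem_filter,
        Finset.mem_univ, true_and]
      push_neg
      constructor
      · intro h i; exact h i
      · intro h i; exact h i
    have hUcard : ((Finset.univ.biUnion Bset).card : ℝ) ≤ Q ^ d := by
      rw [← hcardF]
      exact_mod_cast Finset.card_le_univ _
    have hgoodcard : N = Q ^ d - ((Finset.univ.biUnion Bset).card : ℝ) := by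
      rw [hN, hcomp, Finset.card_compl]
      rw [Nat.cast_sub (Finset.card_le_univ _)]
      rw [hcardF]
    have h3 : ∀ i, ((Bset i).card : ℝ) = Q ^ d / Q := by
      intro i
      rw [eq_div_iff (ne_of_gt hQ0)]
      exact hcount1 i
    have hUle : ((Finset.univ.biUnion Bset).card : ℝ) ≤ (t : ℝ) * (Q ^ d / Q) := by
      have h1 : ((Finset.univ.biUnion Bset).card : ℝ) ≤ ∑ i, ((Bset i).card : ℝ) := by
        exact_mod_cast Finset.card_biUnion_le
      calc ((Finset.univ.biUnion Bset).card : ℝ) ≤ ∑ i, ((Bset i).card : ℝ) := h1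
        _ = ∑ _i : Fin t, Q ^ d / Q := Finset.sum_congr rfl (fun i _ => h3 i)
        _ = (t : ℝ) * (Q ^ d / Q) := by
            rw [Finset.sum_const, Finset.card_univ, Fintype.card_fin, nsmul_eq_mul]
    have hUge : (t : ℝ) * (Q ^ d / Q) - (t : ℝ) * (t : ℝ) * (Q ^ d / Q ^ 2)
        ≤ ((Finset.univ.biUnion Bset).card : ℝ) := by
      have hb := bonferroni Bset
      have hbr : (∑ i, ((Bset i).card : ℝ)) ≤ ((Finset.univ.biUnion Bset).card : ℝ)
          + ∑ q ∈ (Finset.univ : Finset (Fin t)).offDiag, (((Bset q.1 ∩ Bset q.2).card : ℝ)) := by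
        exact_mod_cast hb
      have h4 : ∀ q ∈ (Finset.univ : Finset (Fin t)).offDiag,
          (((Bset q.1 ∩ Bset q.2).card : ℝ)) = Q ^ d / Q ^ 2 := by
        intro q hq
        rw [Finset.mem_offDiag] at hq
        rw [eq_div_iff (by positivity)]
        exact hcount2 q.1 q.2 hq.2.2
      have h5 : ∑ q ∈ (Finset.univ : Finset (Fin t)).offDiag,
          (((Bset q.1 ∩ Bset q.2).card : ℝ)) ≤ (t : ℝ) * (t : ℝ) * (Q ^ d / Q ^ 2) := by
        rw [Finset.sum_congr rfl h4, Finset.sum_const, nsmul_eq_mul, Finset.offDiag_card,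
          Finset.card_univ, Fintype.card_fin]
        have hcast : ((t * t - t : ℕ) : ℝ) ≤ (t : ℝ) * (t : ℝ) := by
          have : (t * t - t : ℕ) ≤ t * t := Nat.sub_le _ _
          calc ((t * t - t : ℕ) : ℝ) ≤ ((t * t : ℕ) : ℝ) := by exact_mod_cast this
            _ = (t : ℝ) * (t : ℝ) := by push_cast; ring
        apply mul_le_mul_of_nonneg_right hcast (by positivity)
      have h6 : (∑ i, ((Bset i).card : ℝ)) = (t : ℝ) * (Q ^ d / Q) := by
        rw [Finset.sum_congr rfl (fun i _ => h3 i), Finset.sum_const, Finset.card_univ,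
          Fintype.card_fin, nsmul_eq_mul]
      linarith only [hbr, h5, h6]
    have hNge : Q ^ d - (t : ℝ) * (Q ^ d / Q) ≤ N := by rw [hgoodcard]; linarith only [hUle]
    have hNle2 : N ≤ Q ^ d - (t : ℝ) * (Q ^ d / Q) + (t : ℝ) * (t : ℝ) * (Q ^ d / Q ^ 2) := by
      rw [hgoodcard]; linarith only [hUge]
    -- the analytic estimate
    have hQ1 : (0:ℝ) < Q - 1 := by linarith only [hQ2]
    set u : ℝ := 1 / Q with hu
    set ε : ℝ := 1 / (Q - 1) with hε
    have hu0 : (0:ℝ) < u := by rw [hu]; positivity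
    have hε0 : (0:ℝ) < ε := by rw [hε]; positivity
    have ht0 : (0:ℝ) ≤ (t : ℝ) := by linarith only [ht1]
    have hεu : ε - u = ε * u := by
      rw [hu, hε]
      field_simp
      ring
    have hQt : 2 * (t : ℝ) + 2 ≤ Q := by
      rw [hQdef]
      linarith only [hbig', sq_nonneg (L:ℝ)]
    have hε2u : ε ≤ 2 * u := by
      have h' : (1:ℝ)/(Q-1) ≤ 2/Q := by
        rw [div_le_div_iff₀ hQ1 hQ0]
        linarith only [hQ2]
      have e : (2:ℝ)/Q = 2*(1/Q) := by ring
      rw [hu, hε]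
      linarith only [h', e]
    have htε : (t : ℝ) * ε ≤ 1 / 2 := by
      rw [hε, mul_one_div, div_le_div_iff₀ hQ1 (by norm_num : (0:ℝ) < 2)]
      linarith only [hQt]
    have htu : (t : ℝ) * u ≤ 1 / 2 := by
      rw [hu, mul_one_div, div_le_div_iff₀ hQ0 (by norm_num : (0:ℝ) < 2)]
      linarith only [hQt]
    have hεu' : u ≤ ε := by
      rw [hu, hε]
      exact one_div_le_one_div_of_le hQ1 (by linarith only [hQ2])
    have e1 : (t : ℝ) * (Q ^ d / Q) = (t : ℝ) * u * Q ^ d := by rw [hu]; ring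
    have e2 : (t : ℝ) * (t : ℝ) * (Q ^ d / Q ^ 2) = (t : ℝ) * (t : ℝ) * u ^ 2 * Q ^ d := by
      rw [hu]; ring
    have hx1 : 1 - (t : ℝ) * u ≤ N / Q ^ d := by
      rw [le_div_iff₀ hQd0]
      linarith only [hNge, e1]
    have hx2 : N / Q ^ d ≤ 1 - (t : ℝ) * u + (t : ℝ) * (t : ℝ) * u ^ 2 := by
      rw [div_le_iff₀ hQd0]
      linarith only [hNle2, e1, e2]
    have hrε : r = 1 + ε := by
      rw [hr, hε]
      field_simp
      ring
    have hplow : 1 + (t : ℝ) * ε ≤ r ^ t := by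
      rw [hrε]
      exact one_add_mul_le_pow (by linarith only [hε0] : (-2:ℝ) ≤ ε) t
    have hpup : r ^ t ≤ 1 + (t : ℝ) * ε + (t : ℝ) ^ 2 * ε ^ 2 := by
      rw [hrε]
      exact pow_one_add_le t ε hε0.le (by linarith only [htε])
    have hx0 : (0:ℝ) ≤ N / Q ^ d := by positivity
    have haε0 : (0:ℝ) ≤ (t : ℝ) * ε := mul_nonneg ht0 hε0.le
    have hb0 : (0:ℝ) ≤ (t : ℝ) * u := mul_nonneg ht0 hu0.le
    have hβup : r ^ t * (N / Q ^ d)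
        ≤ (1 + (t : ℝ) * ε + (t : ℝ) ^ 2 * ε ^ 2) * (1 - (t : ℝ) * u + (t : ℝ) * (t : ℝ) * u ^ 2) :=
      mul_le_mul hpup hx2 hx0
        (by linarith only [haε0, sq_nonneg ((t : ℝ) * ε)])
    have hβlow : (1 + (t : ℝ) * ε) * (1 - (t : ℝ) * u) ≤ r ^ t * (N / Q ^ d) :=
      mul_le_mul hplow hx1 (by linarith only [htu]) (pow_nonneg hrpos.le t)
    -- polynomial bounds
    have ha2b : (t : ℝ) * ε ≤ 2 * ((t : ℝ) * u) := by
      linarith only [mul_le_mul_of_nonneg_left hε2u ht0]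
    have hba : (t : ℝ) * u ≤ (t : ℝ) * ε := by
      linarith only [mul_le_mul_of_nonneg_left hεu' ht0]
    have hab2 : (t : ℝ) * ε - (t : ℝ) * u ≤ 2 * ((t : ℝ) * u) ^ 2 := by
      have h7 : (t : ℝ) * ε - (t : ℝ) * u = (t : ℝ) * (ε * u) := by rw [← hεu]; ring
      have h8 : (t : ℝ) * (ε * u) ≤ (t : ℝ) * (2 * u * u) :=
        mul_le_mul_of_nonneg_left (by
          linarith only [mul_le_mul_of_nonneg_right hε2u hu0.le]) ht0
      have h9 : (0:ℝ) ≤ ((t : ℝ) - 1) * (t : ℝ) * u ^ 2 :=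
        mul_nonneg (mul_nonneg (by linarith only [ht1]) ht0) (sq_nonneg u)
      linarith only [h7, h8, h9]
    have hkey1 : (1 + (t : ℝ) * ε + (t : ℝ) ^ 2 * ε ^ 2)
        * (1 - (t : ℝ) * u + (t : ℝ) * (t : ℝ) * u ^ 2) - 1 ≤ 16 * (t : ℝ) ^ 2 * u ^ 2 := by
      have hb1 : (t : ℝ) * u ≤ 1 := by linarith only [htu]
      have ha4 : ((t : ℝ) * ε) ^ 2 ≤ (2 * ((t : ℝ) * u)) ^ 2 := by
        have := mul_self_le_mul_self haε0 ha2b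
        linarith only [this]
      have h5 : (0:ℝ) ≤ ((t : ℝ) * ε) * (((t : ℝ) * u) - ((t : ℝ) * u) ^ 2) :=
        mul_nonneg haε0 (by
          have := mul_le_of_le_one_left hb0 hb1
          linarith only [this])
      have h6 : ((t : ℝ) * ε) ^ 2 * (1 - ((t : ℝ) * u) + ((t : ℝ) * u) ^ 2)
          ≤ ((t : ℝ) * ε) ^ 2 := by
        apply mul_le_of_le_one_right (sq_nonneg _)
        have := mul_le_of_le_one_left hb0 hb1
        linarith only [this]
      linarith only [hab2, ha4, h5, h6, sq_nonneg ((t : ℝ) * u)]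
    have hkey2 : -(16 * (t : ℝ) ^ 2 * u ^ 2)
        ≤ (1 + (t : ℝ) * ε) * (1 - (t : ℝ) * u) - 1 := by
      have habb : ((t : ℝ) * ε) * ((t : ℝ) * u) ≤ 2 * ((t : ℝ) * u) ^ 2 := by
        have := mul_le_mul_of_nonneg_right ha2b hb0
        linarith only [this]
      linarith only [hba, habb, sq_nonneg ((t : ℝ) * u)]
    have hCge : 16 * (t : ℝ) ^ 2 ≤ C := by
      have h2t0 : (0:ℝ) < 2 ^ t := by positivity
      have hP1 : (1:ℝ) ≤ P0 := by
        rw [hP0]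
        linarith only [sq_nonneg (L:ℝ), ht1]
      have hP2 : (1:ℝ) ≤ P0 ^ 2 := by
        have := mul_self_le_mul_self (by norm_num : (0:ℝ) ≤ 1) hP1
        linarith only [this]
      have h9 : (0:ℝ) ≤ 16 * (t : ℝ) ^ 2 * (P0 ^ 2 - 1) :=
        mul_nonneg (by positivity) (by linarith only [hP2])
      calc 16 * (t : ℝ) ^ 2 ≤ 16 * (t : ℝ) ^ 2 * P0 ^ 2 := by linarith only [h9]
        _ ≤ C := by
            rw [hC]
            apply mul_le_mul_of_nonneg_right _ (sq_nonneg P0)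
            linarith only [h2t0]
    calc |r ^ t * N / Q ^ d - 1| = |r ^ t * (N / Q ^ d) - 1| := by rw [mul_div_assoc]
      _ ≤ 16 * (t : ℝ) ^ 2 * u ^ 2 := by
          rw [abs_le]
          constructor
          · linarith only [hβlow, hkey2]
          · linarith only [hβup, hkey1]
      _ ≤ C * u ^ 2 := mul_le_mul_of_nonneg_right hCge (sq_nonneg u)
      _ = C / Q ^ 2 := by rw [hu]; ring
end

section
/- Let Ψ = (ψ_1,…,ψ_t) be a system of affine-linear forms on Z^d, no two of which are affinely related, and let r = dim of the span of the homogeneous parts ψ̇_1,…,ψ̇_t (over Q). Then the complexity of Ψ is at most t − r. -/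
/-- The affine-linear form `ψ_i(n) = ∑_j A i j * n j + c i` lies in the affine-linear span
(over `ℚ`) of the class of forms `{ψ_j : j ∈ S}`. -/
def inAffineSpan {t d : ℕ} (A : Fin t → Fin d → ℤ) (c : Fin t → ℤ)
    (S : Set (Fin t)) (i : Fin t) : Prop :=
  ∃ (lam : Fin t → ℚ) (mu : ℚ), (∀ j, j ∉ S → lam j = 0) ∧
    ∀ n : Fin d → ℚ,
      (∑ j, (A i j : ℚ) * n j) + (c i : ℚ)
        = (∑ j, lam j * ((∑ k, (A j k : ℚ) * n k) + (c j : ℚ))) + mu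

/-- The system has `i`-complexity at most `s`. -/
def iComplexityAtMost {t d : ℕ} (A : Fin t → Fin d → ℤ) (c : Fin t → ℤ)
    (i : Fin t) (s : ℕ) : Prop :=
  ∃ Cl : Fin (s + 1) → Set (Fin t),
    (∀ m, i ∉ Cl m) ∧ (∀ j, j ≠ i → ∃ m, j ∈ Cl m) ∧
    ∀ m, ¬ inAffineSpan A c (Cl m) i

/-! Extend `ψ̇_i` to a basis `{ψ̇_j : j ∈ T}` of the span of the homogeneous parts, with
`|T| = r`. By linear independence `ψ̇_i` is not in the span of the other `ψ̇_j`, `j ∈ T`, so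
`ψ_i` is not in the affine span of `T \ {i}`; and since no two forms are affinely related,
`ψ_i` is not in the affine span of any single `ψ_j`, `j ≠ i`. Hence `T \ {i}` together with
the `t - r` singletons outside `T` is an admissible cover. -/

open Module Submodule Set

theorem exists_finset_linearIndepOn_card_eq_finrank {K V ι : Type*} [DivisionRing K]
    [AddCommGroup V] [Module K V] [Fintype ι] (v : ι → V) {i : ι} (hi : v i ≠ 0) :
    ∃ T : Finset ι, i ∈ T ∧ LinearIndepOn K v (T : Set ι) ∧
      T.card = finrank K (span K (range v)) := by
  classical
  obtain ⟨b, -, hib, hspan, hb⟩ :=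
    exists_linearIndepOn_extension (LinearIndepOn.singleton (R := K) hi) (subset_univ {i})
  have hspan_eq : span K (v '' b) = span K (range v) :=
    le_antisymm (span_mono (image_subset_range v b))
      (span_le.2 (by simpa only [image_univ] using hspan))
  refine ⟨b.toFinset, by simpa using hib, by simpa using hb, ?_⟩
  rw [← hspan_eq, image_eq_range, finrank_span_eq_card hb.linearIndependent,
    toFinset_card]

section AffineForms

variable {t d : ℕ} (A : Fin t → Fin d → ℤ) (c : Fin t → ℤ)

/-- The homogeneous part `ψ̇_j` of the form `ψ_j`, as a vector of `ℚ^d`. -/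
def homPart (j : Fin t) : Fin d → ℚ := fun k => A j k

variable {A c}

/-- Comparing the values of both sides at `0` and at the unit vectors `e_k` isolates the
coefficients of the homogeneous parts. -/
theorem inAffineSpan.homPart_mem_span {S : Set (Fin t)} {i : Fin t}
    (h : inAffineSpan A c S i) : homPart A i ∈ span ℚ (homPart A '' S) := by
  obtain ⟨lam, mu, hlam, heq⟩ := h
  have hcoeff : homPart A i = ∑ j, lam j • homPart A j := by
    funext k
    have h1 := heq (Pi.single k 1)
    have h0 := heq 0
    simp only [mul_ite, mul_one, mul_zero, Pi.single_apply, Finset.sum_ite_eq',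
      Finset.mem_univ, if_true, Pi.zero_apply, Finset.sum_const_zero, zero_add] at h1 h0
    simp only [mul_add, Finset.sum_add_distrib] at h1
    simp only [homPart, Finset.sum_apply, Pi.smul_apply, smul_eq_mul]
    linarith
  rw [hcoeff]
  refine sum_mem fun j _ => ?_
  by_cases hj : j ∈ S
  · exact smul_mem _ _ (subset_span (mem_image_of_mem _ hj))
  · simp [hlam j hj]

theorem not_inAffineSpan_singleton {i j : Fin t}
    (hij : ∀ a b : ℚ, (∀ k, a * (A i k : ℚ) = b * (A j k : ℚ)) → a = 0 ∧ b = 0) :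
    ¬ inAffineSpan A c {j} i := by
  intro h
  have hmem := h.homPart_mem_span
  rw [image_singleton, mem_span_singleton] at hmem
  obtain ⟨a, ha⟩ := hmem
  have := hij 1 a fun k => by simpa [homPart] using (congrFun ha k).symm
  exact one_ne_zero this.1

theorem iComplexityAtMost_of_finset {i : Fin t} {T : Finset (Fin t)} (hiT : i ∈ T)
    (hT : ¬ inAffineSpan A c (T.erase i : Set (Fin t)) i)
    (hout : ∀ j ∉ T, ¬ inAffineSpan A c {j} i) :
    iComplexityAtMost A c i (t - T.card) := by
  let e : (Tᶜ : Finset (Fin t)) ≃ Fin (t - T.card) :=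
    Tᶜ.equivFin.trans (finCongr (by rw [Finset.card_compl, Fintype.card_fin]))
  have he : ∀ m, (e.symm m : Fin t) ∉ T := fun m => Finset.mem_compl.1 (e.symm m).2
  refine ⟨Fin.cons (T.erase i : Set (Fin t)) fun m => {(e.symm m : Fin t)}, ?_, ?_, ?_⟩
  · refine Fin.cases (by simp) fun m => ?_
    simpa only [Fin.cons_succ, mem_singleton_iff] using fun h : i = e.symm m => he m (h ▸ hiT)
  · intro j hj
    by_cases hjT : j ∈ T
    · exact ⟨0, by simpa using ⟨hjT, hj⟩⟩
    · exact ⟨(e ⟨j, Finset.mem_compl.2 hjT⟩).succ, by simp⟩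
  · exact Fin.cases hT fun m => hout _ (he m)

end AffineForms

/-- If no two of the non-constant forms are affinely related, and `r` is the dimension of the
`ℚ`-span of the homogeneous parts, then the complexity of the system is at most `t - r`:
every `i`-complexity is at most `t - r`. -/
theorem complexity_le_codim (t d : ℕ)
    (A : Fin t → Fin d → ℤ) (c : Fin t → ℤ) (hcon : ∀ i, A i ≠ 0)
    (hpar : ∀ i j, i ≠ j → ∀ a b : ℚ,
      (∀ k, a * (A i k : ℚ) = b * (A j k : ℚ)) → a = 0 ∧ b = 0) :
    ∀ i, iComplexityAtMost A c i
      (t - Module.finrank ℚ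
        ↥(Submodule.span ℚ (Set.range fun i' : Fin t => fun k : Fin d => ((A i' k : ℚ))))) := by
  intro i
  have hi : homPart A i ≠ 0 := fun h =>
    hcon i (funext fun k => by simpa [homPart] using congrFun h k)
  obtain ⟨T, hiT, hT, hcard⟩ := exists_finset_linearIndepOn_card_eq_finrank (K := ℚ) _ hi
  change iComplexityAtMost A c i (t - finrank ℚ (span ℚ (range (homPart A))))
  rw [← hcard]
  refine iComplexityAtMost_of_finset hiT (fun h => ?_) fun j hj =>
    not_inAffineSpan_singleton (hpar i j fun hij => hj (hij ▸ hiT))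
  exact hT.notMem_span hiT (by simpa using h.homPart_mem_span)
end

section
/- (Gowers–Cauchy–Schwarz inequality for box norms) Let (X_α)_{α∈A} be a finite nonempty collection of finite nonempty sets, write X_A = ∏_{α∈A} X_α, and for each ω ∈ {0,1}^A let f_ω : X_A → C. Then |E_{x^{(0)},x^{(1)} ∈ X_A} ∏_{ω∈{0,1}^A} C^{|ω|} f_ω(x^{(ω)})| ≤ ∏_{ω∈{0,1}^A} ‖f_ω‖_{□(X_A)}, where x^{(ω)} denotes the point whose α-coordinate is x^{(ω_α)}_α, C is complex conjugation, and |ω| = ∑_α ω_α. -/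
/-- The Gowers box average: for a family of functions `f_ω : X_A → ℂ` indexed by
`ω ∈ {0,1}^A`, the average `E_{x⁰,x¹ ∈ X_A} ∏_ω C^{|ω|} f_ω(x^{(ω)})`, where `C` is complex
conjugation, `|ω|` is the number of coordinates where `ω` is `1`, and `x^{(ω)}` has
`α`-coordinate `x¹_α` if `ω_α = 1` and `x⁰_α` otherwise. -/
noncomputable def gowersAvg {ι : Type} [Fintype ι] [DecidableEq ι] {X : ι → Type} [∀ α, Fintype (X α)]
    (f : (ι → Bool) → (∀ α, X α) → ℂ) : ℂ :=
  (∑ x₀ : ∀ α, X α, ∑ x₁ : ∀ α, X α, ∏ ω : ι → Bool,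
      (if Even ((Finset.univ.filter fun α => ω α = true).card)
        then f ω (fun α => if ω α then x₁ α else x₀ α)
        else (starRingEnd ℂ) (f ω (fun α => if ω α then x₁ α else x₀ α))))
    / ((Fintype.card (∀ α, X α) : ℂ)) ^ 2

/-- The Gowers box norm `‖g‖_{□(X_A)}`, defined as the `2^{|A|}`-th root of the Gowers box
average with all functions equal to `g` (that average is a non-negative real number). -/
noncomputable def boxNorm {ι : Type} [Fintype ι] [DecidableEq ι] {X : ι → Type} [∀ α, Fintype (X α)]
    (g : (∀ α, X α) → ℂ) : ℝ :=
  ‖gowersAvg fun _ => g‖ ^ ((1 : ℝ) / (2 : ℝ) ^ Fintype.card ι)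

namespace GCS

open Finset Function
set_option maxHeartbeats 1000000

variable {ι : Type} [Fintype ι] [DecidableEq ι] {X : ι → Type} [∀ α, Fintype (X α)]

noncomputable def gTerm (f : (ι → Bool) → (∀ α, X α) → ℂ) (ω : ι → Bool)
    (x₀ x₁ : ∀ α, X α) : ℂ :=
  if Even ((Finset.univ.filter fun β => ω β = true).card)
    then f ω (fun β => if ω β then x₁ β else x₀ β)
    else (starRingEnd ℂ) (f ω (fun β => if ω β then x₁ β else x₀ β))

/-- Fubini for updates -/
def updEquiv (α : ι) : ((∀ β, X β) × X α) ≃ ((∀ β, X β) × X α) where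
  toFun p := (Function.update p.1 α p.2, p.1 α)
  invFun p := (Function.update p.1 α p.2, p.1 α)
  left_inv p := by
    simp [Function.update_idem, Function.update_eq_self]
  right_inv p := by
    simp [Function.update_idem, Function.update_eq_self]

lemma sum_update (α : ι) (g : (∀ β, X β) → ℂ) :
    ∑ x : ∀ β, X β, ∑ t : X α, g (Function.update x α t)
      = (Fintype.card (X α) : ℂ) * ∑ x : ∀ β, X β, g x := by
  calc ∑ x : ∀ β, X β, ∑ t : X α, g (Function.update x α t)
      = ∑ p : (∀ β, X β) × X α, g (Function.update p.1 α p.2) :=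
        (Fintype.sum_prod_type (fun p : ((β : ι) → X β) × X α => g (Function.update p.1 α p.2))).symm
    _ = ∑ p : (∀ β, X β) × X α, g p.1 :=
        Fintype.sum_equiv (updEquiv α) _ _ (fun p => rfl)
    _ = ∑ x : ∀ β, X β, ∑ _t : X α, g x := Fintype.sum_prod_type (fun p : ((β : ι) → X β) × X α => g p.1)
    _ = (Fintype.card (X α) : ℂ) * ∑ x : ∀ β, X β, g x := by
        simp [Finset.sum_const, Finset.mul_sum, mul_comm]

lemma abs_sum_mul_sq_le {κ : Type} [Fintype κ] (u v : κ → ℂ) :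
    ‖∑ i, u i * v i‖ ^ 2
      ≤ (∑ i, Complex.normSq (u i)) * (∑ i, Complex.normSq (v i)) := by
  have h1 : ‖∑ i, u i * v i‖
      ≤ ∑ i, ‖u i‖ * ‖v i‖ := by
    refine le_trans (norm_sum_le _ _) ?_
    simp [map_mul, le_refl]
  have h2 := Finset.sum_mul_sq_le_sq_mul_sq univ
    (fun i => ‖u i‖) (fun i => ‖v i‖)
  calc ‖∑ i, u i * v i‖ ^ 2
      ≤ (∑ i, ‖u i‖ * ‖v i‖) ^ 2 := by
        refine pow_le_pow_left₀ (norm_nonneg _) h1 2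
    _ ≤ (∑ i, ‖u i‖ ^ 2) * (∑ i, ‖v i‖ ^ 2) := h2
    _ = _ := by simp [Complex.sq_norm]

lemma update_self_of_eq {σ : ι → Bool} {α : ι} {b : Bool} (h : σ α = b) :
    Function.update σ α b = σ := by
  subst h; exact Function.update_eq_self α σ

lemma prod_filter_update_false {M : Type} [CommMonoid M] (α : ι) (h : (ι → Bool) → M) :
    ∏ ω ∈ univ.filter (fun ω : ι → Bool => ω α = true), h (Function.update ω α false)
      = ∏ ω ∈ univ.filter (fun ω : ι → Bool => ω α = false), h ω := by
  refine Finset.prod_nbij' (fun ω => Function.update ω α false)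
    (fun ω => Function.update ω α true) ?_ ?_ ?_ ?_ ?_ <;> intro ω hω <;>
    simp only [mem_filter, mem_univ, true_and] at hω ⊢
  · exact Function.update_self _ _ _
  · exact Function.update_self _ _ _
  · rw [Function.update_idem]; exact update_self_of_eq hω
  · rw [Function.update_idem]; exact update_self_of_eq hω

lemma prod_filter_update_true {M : Type} [CommMonoid M] (α : ι) (h : (ι → Bool) → M) :
    ∏ ω ∈ univ.filter (fun ω : ι → Bool => ω α = false), h (Function.update ω α true)
      = ∏ ω ∈ univ.filter (fun ω : ι → Bool => ω α = true), h ω := by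
  refine Finset.prod_nbij' (fun ω => Function.update ω α true)
    (fun ω => Function.update ω α false) ?_ ?_ ?_ ?_ ?_ <;> intro ω hω <;>
    simp only [mem_filter, mem_univ, true_and] at hω ⊢
  · exact Function.update_self _ _ _
  · exact Function.update_self _ _ _
  · rw [Function.update_idem]; exact update_self_of_eq hω
  · rw [Function.update_idem]; exact update_self_of_eq hω

lemma card_filter_update_true (ω : ι → Bool) (α : ι) (h : ω α = false) :
    (univ.filter fun β => Function.update ω α true β = true).card
      = (univ.filter fun β => ω β = true).card + 1 := by
  have he : (univ.filter fun β => Function.update ω α true β = true)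
      = insert α (univ.filter fun β => ω β = true) := by
    ext β
    rcases eq_or_ne β α with rfl | hb
    · simp
    · simp [Function.update_of_ne hb, hb]
  rw [he, Finset.card_insert_of_notMem]
  simp [h]


lemma gTerm_update_right (f : (ι → Bool) → (∀ α, X α) → ℂ) (ω : ι → Bool) (α : ι)
    (h : ω α = false) (x₀ x₁ : ∀ β, X β) (t : X α) :
    gTerm f ω x₀ (Function.update x₁ α t) = gTerm f ω x₀ x₁ := by
  have hp : (fun β => if ω β then Function.update x₁ α t β else x₀ β)
      = (fun β => if ω β then x₁ β else x₀ β) := by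
    funext β
    rcases eq_or_ne β α with rfl | hb
    · simp [h]
    · simp [Function.update_of_ne hb]
  simp only [gTerm, hp]

lemma gTerm_update_left (f : (ι → Bool) → (∀ α, X α) → ℂ) (ω : ι → Bool) (α : ι)
    (h : ω α = true) (x₀ x₁ : ∀ β, X β) (t : X α) :
    gTerm f ω (Function.update x₀ α t) x₁ = gTerm f ω x₀ x₁ := by
  have hp : (fun β => if ω β then x₁ β else Function.update x₀ α t β)
      = (fun β => if ω β then x₁ β else x₀ β) := by
    funext β
    rcases eq_or_ne β α with rfl | hb
    · simp [h]
    · simp [Function.update_of_ne hb]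
  simp only [gTerm, hp]

/-- conjugation identity for the `f(ω[α:=false])` family at `ω α = true`. -/
lemma gTerm_false_conj (f : (ι → Bool) → (∀ α, X α) → ℂ) (ω : ι → Bool) (α : ι)
    (h : ω α = true) (x₀ x₁ : ∀ β, X β) :
    gTerm (fun ω' => f (Function.update ω' α false)) ω x₀ x₁
      = (starRingEnd ℂ)
          (gTerm f (Function.update ω α false) (Function.update x₀ α (x₁ α)) x₁) := by
  set ω' := Function.update ω α false with hω'
  have hωω : Function.update ω' α true = ω := by
    rw [hω', Function.update_idem]; exact update_self_of_eq h
  have hcard : (univ.filter fun β => ω β = true).card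
      = (univ.filter fun β => ω' β = true).card + 1 := by
    conv_lhs => rw [← hωω]
    exact card_filter_update_true ω' α (Function.update_self _ _ _)
  have hp : (fun β => if ω β then x₁ β else x₀ β)
      = (fun β => if ω' β then x₁ β else Function.update x₀ α (x₁ α) β) := by
    funext β
    rcases eq_or_ne β α with rfl | hb
    · simp [h, hω']
    · simp [hω', Function.update_of_ne hb]
  simp only [gTerm, hcard, hp, Nat.even_add_one]
  rcases Nat.even_or_odd (univ.filter fun β => ω' β = true).card with he | ho
  · rw [← hω']; simp [he]
  · rw [← hω']; simp [Nat.not_even_iff_odd.mpr ho, ho]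

/-- conjugation identity for the `f(ω[α:=true])` family at `ω α = false`. -/
lemma gTerm_true_conj (f : (ι → Bool) → (∀ α, X α) → ℂ) (ω : ι → Bool) (α : ι)
    (h : ω α = false) (x₀ x₁ : ∀ β, X β) :
    gTerm (fun ω' => f (Function.update ω' α true)) ω x₀ x₁
      = (starRingEnd ℂ)
          (gTerm f (Function.update ω α true) x₀ (Function.update x₁ α (x₀ α))) := by
  set ω' := Function.update ω α true with hω'
  have hcard : (univ.filter fun β => ω' β = true).card
      = (univ.filter fun β => ω β = true).card + 1 :=
    card_filter_update_true ω α h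
  have hp : (fun β => if ω β then x₁ β else x₀ β)
      = (fun β => if ω' β then Function.update x₁ α (x₀ α) β else x₀ β) := by
    funext β
    rcases eq_or_ne β α with rfl | hb
    · simp [h, hω']
    · simp [hω', Function.update_of_ne hb]
  simp only [gTerm, hcard, hp, Nat.even_add_one]
  rcases Nat.even_or_odd (univ.filter fun β => ω β = true).card with he | ho
  · simp [he, hω']
  · simp [Nat.not_even_iff_odd.mpr ho, ho, hω']


noncomputable def Aprod (f : (ι → Bool) → (∀ α, X α) → ℂ) (α : ι) (x₀ x₁ : ∀ β, X β) : ℂ :=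
  ∏ ω ∈ univ.filter (fun ω : ι → Bool => ω α = false), gTerm f ω x₀ x₁

noncomputable def Bprod (f : (ι → Bool) → (∀ α, X α) → ℂ) (α : ι) (x₀ x₁ : ∀ β, X β) : ℂ :=
  ∏ ω ∈ univ.filter (fun ω : ι → Bool => ω α = true), gTerm f ω x₀ x₁

variable {f : (ι → Bool) → (∀ α, X α) → ℂ} {α : ι}

lemma Aprod_update (x₀ x₁ : ∀ β, X β) (t : X α) :
    Aprod f α x₀ (Function.update x₁ α t) = Aprod f α x₀ x₁ := by
  refine Finset.prod_congr rfl fun ω hω => ?_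
  simp only [mem_filter, mem_univ, true_and] at hω
  exact gTerm_update_right f ω α hω x₀ x₁ t

lemma Bprod_update (x₀ x₁ : ∀ β, X β) (t : X α) :
    Bprod f α (Function.update x₀ α t) x₁ = Bprod f α x₀ x₁ := by
  refine Finset.prod_congr rfl fun ω hω => ?_
  simp only [mem_filter, mem_univ, true_and] at hω
  exact gTerm_update_left f ω α hω x₀ x₁ t

lemma prod_gTerm_eq (x₀ x₁ : ∀ β, X β) :
    ∏ ω : ι → Bool, gTerm f ω x₀ x₁ = Aprod f α x₀ x₁ * Bprod f α x₀ x₁ := by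
  rw [Aprod, Bprod, ← Finset.prod_filter_mul_prod_filter_not univ
    (fun ω : ι → Bool => ω α = false)]
  congr 1
  refine Finset.prod_congr ?_ fun _ _ => rfl
  ext ω; simp

lemma prod_gTerm_false (x₀ x₁ : ∀ β, X β) :
    ∏ ω : ι → Bool, gTerm (fun ω' => f (Function.update ω' α false)) ω x₀ x₁
      = Aprod f α x₀ x₁
        * (starRingEnd ℂ) (Aprod f α (Function.update x₀ α (x₁ α)) x₁) := by
  rw [prod_gTerm_eq (α := α)]
  congr 1
  · refine Finset.prod_congr rfl fun ω hω => ?_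
    simp only [mem_filter, mem_univ, true_and] at hω
    have : Function.update ω α false = ω := update_self_of_eq hω
    simp only [gTerm, this]
  · calc ∏ ω ∈ univ.filter (fun ω : ι → Bool => ω α = true),
          gTerm (fun ω' => f (Function.update ω' α false)) ω x₀ x₁
        = ∏ ω ∈ univ.filter (fun ω : ι → Bool => ω α = true),
            (starRingEnd ℂ)
              (gTerm f (Function.update ω α false) (Function.update x₀ α (x₁ α)) x₁) := by
          refine Finset.prod_congr rfl fun ω hω => ?_
          simp only [mem_filter, mem_univ, true_and] at hω
          exact gTerm_false_conj f ω α hω x₀ x₁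
      _ = (starRingEnd ℂ) (∏ ω ∈ univ.filter (fun ω : ι → Bool => ω α = true),
            gTerm f (Function.update ω α false) (Function.update x₀ α (x₁ α)) x₁) :=
          (map_prod _ _ _).symm
      _ = (starRingEnd ℂ) (Aprod f α (Function.update x₀ α (x₁ α)) x₁) := by
          rw [prod_filter_update_false α
            (fun ω => gTerm f ω (Function.update x₀ α (x₁ α)) x₁), Aprod]

lemma prod_gTerm_true (x₀ x₁ : ∀ β, X β) :
    ∏ ω : ι → Bool, gTerm (fun ω' => f (Function.update ω' α true)) ω x₀ x₁
      = Bprod f α x₀ x₁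
        * (starRingEnd ℂ) (Bprod f α x₀ (Function.update x₁ α (x₀ α))) := by
  rw [prod_gTerm_eq (α := α), mul_comm]
  congr 1
  · refine Finset.prod_congr rfl fun ω hω => ?_
    simp only [mem_filter, mem_univ, true_and] at hω
    have : Function.update ω α true = ω := update_self_of_eq hω
    simp only [gTerm, this]
  · calc ∏ ω ∈ univ.filter (fun ω : ι → Bool => ω α = false),
          gTerm (fun ω' => f (Function.update ω' α true)) ω x₀ x₁
        = ∏ ω ∈ univ.filter (fun ω : ι → Bool => ω α = false),
            (starRingEnd ℂ)
              (gTerm f (Function.update ω α true) x₀ (Function.update x₁ α (x₀ α))) := by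
          refine Finset.prod_congr rfl fun ω hω => ?_
          simp only [mem_filter, mem_univ, true_and] at hω
          exact gTerm_true_conj f ω α hω x₀ x₁
      _ = (starRingEnd ℂ) (∏ ω ∈ univ.filter (fun ω : ι → Bool => ω α = false),
            gTerm f (Function.update ω α true) x₀ (Function.update x₁ α (x₀ α))) :=
          (map_prod _ _ _).symm
      _ = (starRingEnd ℂ) (Bprod f α x₀ (Function.update x₁ α (x₀ α))) := by
          rw [prod_filter_update_true α
            (fun ω => gTerm f ω x₀ (Function.update x₁ α (x₀ α))), Bprod]


noncomputable def Abar (f : (ι → Bool) → (∀ α, X α) → ℂ) (α : ι) (x₀ x₁ : ∀ β, X β) : ℂ :=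
  ∑ t : X α, Aprod f α (Function.update x₀ α t) x₁

noncomputable def Bbar (f : (ι → Bool) → (∀ α, X α) → ℂ) (α : ι) (x₀ x₁ : ∀ β, X β) : ℂ :=
  ∑ t : X α, Bprod f α x₀ (Function.update x₁ α t)

lemma Abar_update (x₀ x₁ : ∀ β, X β) (s : X α) :
    Abar f α x₀ (Function.update x₁ α s) = Abar f α x₀ x₁ := by
  unfold Abar; exact Finset.sum_congr rfl fun t _ => Aprod_update _ _ _

lemma Abar_update_left (x₀ x₁ : ∀ β, X β) (s : X α) :
    Abar f α (Function.update x₀ α s) x₁ = Abar f α x₀ x₁ := by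
  unfold Abar
  exact Finset.sum_congr rfl fun t _ => by rw [Function.update_idem]

lemma Bbar_update (x₀ x₁ : ∀ β, X β) (s : X α) :
    Bbar f α (Function.update x₀ α s) x₁ = Bbar f α x₀ x₁ := by
  unfold Bbar; exact Finset.sum_congr rfl fun t _ => Bprod_update _ _ _

lemma Bbar_update_right (x₀ x₁ : ∀ β, X β) (s : X α) :
    Bbar f α x₀ (Function.update x₁ α s) = Bbar f α x₀ x₁ := by
  unfold Bbar
  exact Finset.sum_congr rfl fun t _ => by rw [Function.update_idem]

lemma claim1 :
    ((Fintype.card (X α) : ℂ)) ^ 2 * ∑ x₀ : ∀ β, X β, ∑ x₁ : ∀ β, X β,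
        ∏ ω : ι → Bool, gTerm f ω x₀ x₁
      = ∑ x₀ : ∀ β, X β, ∑ x₁ : ∀ β, X β, Abar f α x₀ x₁ * Bbar f α x₀ x₁ := by
  set M : ℂ := (Fintype.card (X α) : ℂ) with hM
  have step2 : ∀ x₀ : ∀ β, X β,
      ∑ x₁ : ∀ β, X β, Aprod f α x₀ x₁ * Bbar f α x₀ x₁
        = M * ∑ x₁ : ∀ β, X β, Aprod f α x₀ x₁ * Bprod f α x₀ x₁ := by
    intro x₀
    calc ∑ x₁ : ∀ β, X β, Aprod f α x₀ x₁ * Bbar f α x₀ x₁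
        = ∑ x₁ : ∀ β, X β, ∑ t : X α,
            (fun y => Aprod f α x₀ y * Bprod f α x₀ y) (Function.update x₁ α t) := by
          refine Finset.sum_congr rfl fun x₁ _ => ?_
          rw [Bbar, Finset.mul_sum]
          exact Finset.sum_congr rfl fun t _ => by simp only [Aprod_update]
      _ = M * ∑ x₁ : ∀ β, X β, Aprod f α x₀ x₁ * Bprod f α x₀ x₁ :=
          sum_update α (fun y => Aprod f α x₀ y * Bprod f α x₀ y)
  have step1 : ∀ x₁ : ∀ β, X β,
      ∑ x₀ : ∀ β, X β, Abar f α x₀ x₁ * Bbar f α x₀ x₁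
        = M * ∑ x₀ : ∀ β, X β, Aprod f α x₀ x₁ * Bbar f α x₀ x₁ := by
    intro x₁
    calc ∑ x₀ : ∀ β, X β, Abar f α x₀ x₁ * Bbar f α x₀ x₁
        = ∑ x₀ : ∀ β, X β, ∑ t : X α,
            (fun y => Aprod f α y x₁ * Bbar f α y x₁) (Function.update x₀ α t) := by
          refine Finset.sum_congr rfl fun x₀ _ => ?_
          rw [Abar, Finset.sum_mul]
          exact Finset.sum_congr rfl fun t _ => by simp only [Bbar_update]
      _ = M * ∑ x₀ : ∀ β, X β, Aprod f α x₀ x₁ * Bbar f α x₀ x₁ :=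
          sum_update α (fun y => Aprod f α y x₁ * Bbar f α y x₁)
  calc M ^ 2 * ∑ x₀ : ∀ β, X β, ∑ x₁ : ∀ β, X β, ∏ ω : ι → Bool, gTerm f ω x₀ x₁
      = M * ∑ x₀ : ∀ β, X β, M * ∑ x₁ : ∀ β, X β,
          Aprod f α x₀ x₁ * Bprod f α x₀ x₁ := by
        rw [pow_two, mul_assoc, Finset.mul_sum]
        congr 1
        refine Finset.sum_congr rfl fun x₀ _ => ?_
        congr 1
        exact Finset.sum_congr rfl fun x₁ _ => prod_gTerm_eq x₀ x₁
    _ = M * ∑ x₀ : ∀ β, X β, ∑ x₁ : ∀ β, X β, Aprod f α x₀ x₁ * Bbar f α x₀ x₁ := by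
        congr 1
        exact Finset.sum_congr rfl fun x₀ _ => (step2 x₀).symm
    _ = M * ∑ x₁ : ∀ β, X β, ∑ x₀ : ∀ β, X β, Aprod f α x₀ x₁ * Bbar f α x₀ x₁ := by
        rw [Finset.sum_comm]
    _ = ∑ x₁ : ∀ β, X β, ∑ x₀ : ∀ β, X β, Abar f α x₀ x₁ * Bbar f α x₀ x₁ := by
        rw [Finset.mul_sum]
        exact Finset.sum_congr rfl fun x₁ _ => (step1 x₁).symm
    _ = ∑ x₀ : ∀ β, X β, ∑ x₁ : ∀ β, X β, Abar f α x₀ x₁ * Bbar f α x₀ x₁ :=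
        Finset.sum_comm

lemma conj_Abar (x₀ x₁ : ∀ β, X β) :
    (starRingEnd ℂ) (Abar f α x₀ x₁)
      = ∑ t : X α, (starRingEnd ℂ) (Aprod f α (Function.update x₀ α t) x₁) :=
  map_sum _ _ _

lemma conj_Bbar (x₀ x₁ : ∀ β, X β) :
    (starRingEnd ℂ) (Bbar f α x₀ x₁)
      = ∑ t : X α, (starRingEnd ℂ) (Bprod f α x₀ (Function.update x₁ α t)) :=
  map_sum _ _ _

lemma claim2 :
    ((Fintype.card (X α) : ℂ)) ^ 2 * ∑ x₀ : ∀ β, X β, ∑ x₁ : ∀ β, X β,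
        ∏ ω : ι → Bool, gTerm (fun ω' => f (Function.update ω' α false)) ω x₀ x₁
      = ∑ x₀ : ∀ β, X β, ∑ x₁ : ∀ β, X β,
          Abar f α x₀ x₁ * (starRingEnd ℂ) (Abar f α x₀ x₁) := by
  set M : ℂ := (Fintype.card (X α) : ℂ) with hM
  have step1 : ∀ x₁ : ∀ β, X β,
      M * ∑ x₀ : ∀ β, X β, Aprod f α x₀ x₁
          * (starRingEnd ℂ) (Aprod f α (Function.update x₀ α (x₁ α)) x₁)
        = ∑ x₀ : ∀ β, X β, Abar f α x₀ x₁
            * (starRingEnd ℂ) (Aprod f α (Function.update x₀ α (x₁ α)) x₁) := by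
    intro x₁
    rw [← sum_update α (fun y => Aprod f α y x₁
      * (starRingEnd ℂ) (Aprod f α (Function.update y α (x₁ α)) x₁))]
    refine Finset.sum_congr rfl fun x₀ _ => ?_
    rw [Abar, Finset.sum_mul]
    refine Finset.sum_congr rfl fun t _ => ?_
    simp only [Function.update_idem]
  have step2 : ∀ x₀ : ∀ β, X β,
      M * ∑ x₁ : ∀ β, X β, Abar f α x₀ x₁
          * (starRingEnd ℂ) (Aprod f α (Function.update x₀ α (x₁ α)) x₁)
        = ∑ x₁ : ∀ β, X β, Abar f α x₀ x₁ * (starRingEnd ℂ) (Abar f α x₀ x₁) := by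
    intro x₀
    rw [← sum_update α (fun y => Abar f α x₀ y
      * (starRingEnd ℂ) (Aprod f α (Function.update x₀ α (y α)) y))]
    refine Finset.sum_congr rfl fun x₁ _ => ?_
    rw [conj_Abar, Finset.mul_sum]
    refine Finset.sum_congr rfl fun t _ => ?_
    simp only [Function.update_self, Abar_update, Aprod_update]
  calc M ^ 2 * ∑ x₀ : ∀ β, X β, ∑ x₁ : ∀ β, X β,
        ∏ ω : ι → Bool, gTerm (fun ω' => f (Function.update ω' α false)) ω x₀ x₁
      = M * ∑ x₁ : ∀ β, X β, M * ∑ x₀ : ∀ β, X β, Aprod f α x₀ x₁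
          * (starRingEnd ℂ) (Aprod f α (Function.update x₀ α (x₁ α)) x₁) := by
        rw [pow_two, mul_assoc]
        congr 1
        rw [Finset.sum_comm, Finset.mul_sum]
        refine Finset.sum_congr rfl fun x₁ _ => ?_
        congr 1
        exact Finset.sum_congr rfl fun x₀ _ => prod_gTerm_false x₀ x₁
    _ = M * ∑ x₁ : ∀ β, X β, ∑ x₀ : ∀ β, X β, Abar f α x₀ x₁
          * (starRingEnd ℂ) (Aprod f α (Function.update x₀ α (x₁ α)) x₁) := by
        congr 1
        exact Finset.sum_congr rfl fun x₁ _ => step1 x₁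
    _ = ∑ x₀ : ∀ β, X β, M * ∑ x₁ : ∀ β, X β, Abar f α x₀ x₁
          * (starRingEnd ℂ) (Aprod f α (Function.update x₀ α (x₁ α)) x₁) := by
        rw [Finset.sum_comm, Finset.mul_sum]
    _ = ∑ x₀ : ∀ β, X β, ∑ x₁ : ∀ β, X β,
          Abar f α x₀ x₁ * (starRingEnd ℂ) (Abar f α x₀ x₁) :=
        Finset.sum_congr rfl fun x₀ _ => step2 x₀

lemma claim3 :
    ((Fintype.card (X α) : ℂ)) ^ 2 * ∑ x₀ : ∀ β, X β, ∑ x₁ : ∀ β, X β,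
        ∏ ω : ι → Bool, gTerm (fun ω' => f (Function.update ω' α true)) ω x₀ x₁
      = ∑ x₀ : ∀ β, X β, ∑ x₁ : ∀ β, X β,
          Bbar f α x₀ x₁ * (starRingEnd ℂ) (Bbar f α x₀ x₁) := by
  set M : ℂ := (Fintype.card (X α) : ℂ) with hM
  have step1 : ∀ x₀ : ∀ β, X β,
      M * ∑ x₁ : ∀ β, X β, Bprod f α x₀ x₁
          * (starRingEnd ℂ) (Bprod f α x₀ (Function.update x₁ α (x₀ α)))
        = ∑ x₁ : ∀ β, X β, Bbar f α x₀ x₁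
            * (starRingEnd ℂ) (Bprod f α x₀ (Function.update x₁ α (x₀ α))) := by
    intro x₀
    rw [← sum_update α (fun y => Bprod f α x₀ y
      * (starRingEnd ℂ) (Bprod f α x₀ (Function.update y α (x₀ α))))]
    refine Finset.sum_congr rfl fun x₁ _ => ?_
    rw [Bbar, Finset.sum_mul]
    refine Finset.sum_congr rfl fun t _ => ?_
    simp only [Function.update_idem]
  have step2 : ∀ x₁ : ∀ β, X β,
      M * ∑ x₀ : ∀ β, X β, Bbar f α x₀ x₁
          * (starRingEnd ℂ) (Bprod f α x₀ (Function.update x₁ α (x₀ α)))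
        = ∑ x₀ : ∀ β, X β, Bbar f α x₀ x₁ * (starRingEnd ℂ) (Bbar f α x₀ x₁) := by
    intro x₁
    rw [← sum_update α (fun y => Bbar f α y x₁
      * (starRingEnd ℂ) (Bprod f α y (Function.update x₁ α (y α))))]
    refine Finset.sum_congr rfl fun x₀ _ => ?_
    rw [conj_Bbar, Finset.mul_sum]
    refine Finset.sum_congr rfl fun t _ => ?_
    simp only [Function.update_self, Bbar_update, Bprod_update]
  calc M ^ 2 * ∑ x₀ : ∀ β, X β, ∑ x₁ : ∀ β, X β,
        ∏ ω : ι → Bool, gTerm (fun ω' => f (Function.update ω' α true)) ω x₀ x₁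
      = M * ∑ x₀ : ∀ β, X β, M * ∑ x₁ : ∀ β, X β, Bprod f α x₀ x₁
          * (starRingEnd ℂ) (Bprod f α x₀ (Function.update x₁ α (x₀ α))) := by
        rw [pow_two, mul_assoc]
        congr 1
        rw [Finset.mul_sum]
        refine Finset.sum_congr rfl fun x₀ _ => ?_
        congr 1
        exact Finset.sum_congr rfl fun x₁ _ => prod_gTerm_true x₀ x₁
    _ = M * ∑ x₀ : ∀ β, X β, ∑ x₁ : ∀ β, X β, Bbar f α x₀ x₁
          * (starRingEnd ℂ) (Bprod f α x₀ (Function.update x₁ α (x₀ α))) := by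
        congr 1
        exact Finset.sum_congr rfl fun x₀ _ => step1 x₀
    _ = ∑ x₁ : ∀ β, X β, M * ∑ x₀ : ∀ β, X β, Bbar f α x₀ x₁
          * (starRingEnd ℂ) (Bprod f α x₀ (Function.update x₁ α (x₀ α))) := by
        rw [Finset.sum_comm, Finset.mul_sum]
    _ = ∑ x₁ : ∀ β, X β, ∑ x₀ : ∀ β, X β,
          Bbar f α x₀ x₁ * (starRingEnd ℂ) (Bbar f α x₀ x₁) :=
        Finset.sum_congr rfl fun x₁ _ => step2 x₁
    _ = ∑ x₀ : ∀ β, X β, ∑ x₁ : ∀ β, X β,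
          Bbar f α x₀ x₁ * (starRingEnd ℂ) (Bbar f α x₀ x₁) := Finset.sum_comm


lemma cs_step [∀ β, Nonempty (X β)] (f : (ι → Bool) → (∀ α, X α) → ℂ) (α : ι) :
    ‖gowersAvg f‖ ^ 2
      ≤ ‖gowersAvg fun ω => f (Function.update ω α false)‖
        * ‖gowersAvg fun ω => f (Function.update ω α true)‖ := by
  have hgA : ∀ g : (ι → Bool) → (∀ α, X α) → ℂ,
      gowersAvg g = (∑ x₀ : ∀ β, X β, ∑ x₁ : ∀ β, X β, ∏ ω : ι → Bool,
        gTerm g ω x₀ x₁) / ((Fintype.card (∀ β, X β) : ℂ)) ^ 2 := fun g => rfl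
  set S : ℂ := ∑ x₀ : ∀ β, X β, ∑ x₁ : ∀ β, X β, ∏ ω : ι → Bool, gTerm f ω x₀ x₁ with hS
  set S₀ : ℂ := ∑ x₀ : ∀ β, X β, ∑ x₁ : ∀ β, X β, ∏ ω : ι → Bool,
    gTerm (fun ω' => f (Function.update ω' α false)) ω x₀ x₁ with hS₀
  set S₁ : ℂ := ∑ x₀ : ∀ β, X β, ∑ x₁ : ∀ β, X β, ∏ ω : ι → Bool,
    gTerm (fun ω' => f (Function.update ω' α true)) ω x₀ x₁ with hS₁
  set M : ℝ := (Fintype.card (X α) : ℝ) with hMdef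
  have hM : (0:ℝ) < M := by
    rw [hMdef]; exact_mod_cast Fintype.card_pos (α := X α)
  set N : ℝ := (Fintype.card (∀ β, X β) : ℝ) with hNdef
  have hN : (0:ℝ) < N := by
    rw [hNdef]; exact_mod_cast Fintype.card_pos (α := ∀ β, X β)
  -- Cauchy–Schwarz on the flattened double sum
  set u : ((∀ β, X β) × (∀ β, X β)) → ℂ := fun p => Abar f α p.1 p.2 with hu
  set v : ((∀ β, X β) × (∀ β, X β)) → ℂ := fun p => Bbar f α p.1 p.2 with hv
  have hcs := abs_sum_mul_sq_le u v
  have huv : ∑ p : ((∀ β, X β) × (∀ β, X β)), u p * v p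
      = ((Fintype.card (X α) : ℂ)) ^ 2 * S := by
    rw [Fintype.sum_prod_type (fun p : ((∀ β, X β) × (∀ β, X β)) => u p * v p)]
    rw [hS, claim1]
  have hu2 : ((∑ p : ((∀ β, X β) × (∀ β, X β)), Complex.normSq (u p) : ℝ) : ℂ)
      = ((Fintype.card (X α) : ℂ)) ^ 2 * S₀ := by
    push_cast
    calc ∑ p : ((∀ β, X β) × (∀ β, X β)), (Complex.normSq (u p) : ℂ)
        = ∑ p : ((∀ β, X β) × (∀ β, X β)), u p * (starRingEnd ℂ) (u p) :=
          Finset.sum_congr rfl fun p _ => (Complex.mul_conj (u p)).symm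
      _ = ∑ x₀ : ∀ β, X β, ∑ x₁ : ∀ β, X β,
            Abar f α x₀ x₁ * (starRingEnd ℂ) (Abar f α x₀ x₁) :=
          Fintype.sum_prod_type
            (fun p : ((∀ β, X β) × (∀ β, X β)) => u p * (starRingEnd ℂ) (u p))
      _ = ((Fintype.card (X α) : ℂ)) ^ 2 * S₀ := by rw [hS₀, claim2]
  have hv2 : ((∑ p : ((∀ β, X β) × (∀ β, X β)), Complex.normSq (v p) : ℝ) : ℂ)
      = ((Fintype.card (X α) : ℂ)) ^ 2 * S₁ := by
    push_cast
    calc ∑ p : ((∀ β, X β) × (∀ β, X β)), (Complex.normSq (v p) : ℂ)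
        = ∑ p : ((∀ β, X β) × (∀ β, X β)), v p * (starRingEnd ℂ) (v p) :=
          Finset.sum_congr rfl fun p _ => (Complex.mul_conj (v p)).symm
      _ = ∑ x₀ : ∀ β, X β, ∑ x₁ : ∀ β, X β,
            Bbar f α x₀ x₁ * (starRingEnd ℂ) (Bbar f α x₀ x₁) :=
          Fintype.sum_prod_type
            (fun p : ((∀ β, X β) × (∀ β, X β)) => v p * (starRingEnd ℂ) (v p))
      _ = ((Fintype.card (X α) : ℂ)) ^ 2 * S₁ := by rw [hS₁, claim3]
  -- take absolute values
  have habs_uv : ‖∑ p : ((∀ β, X β) × (∀ β, X β)), u p * v p‖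
      = M ^ 2 * ‖S‖ := by
    rw [huv, norm_mul, norm_pow, Complex.norm_natCast, hMdef]
  have hsum_u : ∑ p : ((∀ β, X β) × (∀ β, X β)), Complex.normSq (u p)
      = M ^ 2 * ‖S₀‖ := by
    have h := congrArg norm hu2
    rwa [Complex.norm_real, Real.norm_of_nonneg
      (Finset.sum_nonneg fun p _ => Complex.normSq_nonneg (u p)),
      norm_mul, norm_pow, Complex.norm_natCast, ← hMdef] at h
  have hsum_v : ∑ p : ((∀ β, X β) × (∀ β, X β)), Complex.normSq (v p)
      = M ^ 2 * ‖S₁‖ := by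
    have h := congrArg norm hv2
    rwa [Complex.norm_real, Real.norm_of_nonneg
      (Finset.sum_nonneg fun p _ => Complex.normSq_nonneg (v p)),
      norm_mul, norm_pow, Complex.norm_natCast, ← hMdef] at h
  rw [habs_uv, hsum_u, hsum_v] at hcs
  have key : ‖S‖ ^ 2 ≤ ‖S₀‖ * ‖S₁‖ := by
    have h4 : (0:ℝ) < M ^ 2 * M ^ 2 := by positivity
    refine le_of_mul_le_mul_left ?_ h4
    calc M ^ 2 * M ^ 2 * ‖S‖ ^ 2 = (M ^ 2 * ‖S‖) ^ 2 := by ring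
      _ ≤ (M ^ 2 * ‖S₀‖) * (M ^ 2 * ‖S₁‖) := hcs
      _ = M ^ 2 * M ^ 2 * (‖S₀‖ * ‖S₁‖) := by ring
  have habsG : ∀ g : (ι → Bool) → (∀ α, X α) → ℂ,
      ‖gowersAvg g‖
        = ‖∑ x₀ : ∀ β, X β, ∑ x₁ : ∀ β, X β,
            ∏ ω : ι → Bool, gTerm g ω x₀ x₁‖ / N ^ 2 := by
    intro g
    rw [hgA g, norm_div, norm_pow, Complex.norm_natCast, hNdef]
  rw [habsG, habsG, habsG, ← hS, ← hS₀, ← hS₁]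
  calc (‖S‖ / N ^ 2) ^ 2 = ‖S‖ ^ 2 / (N ^ 2 * N ^ 2) := by ring
    _ ≤ (‖S₀‖ * ‖S₁‖) / (N ^ 2 * N ^ 2) := by gcongr
    _ = ‖S₀‖ / N ^ 2 * (‖S₁‖ / N ^ 2) := by ring


lemma key [∀ β, Nonempty (X β)] (f : (ι → Bool) → (∀ α, X α) → ℂ) (s : Finset ι) :
    ‖gowersAvg f‖ ^ (2 ^ Fintype.card ι)
      ≤ ∏ σ : ι → Bool,
          ‖gowersAvg fun ω => f (fun β => if β ∈ s then σ β else ω β)‖ := by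
  have hsplit : ∀ g : (ι → Bool) → ℝ, ∀ α : ι,
      (∏ σ ∈ univ.filter (fun σ : ι → Bool => σ α = false), g σ)
        * (∏ σ ∈ univ.filter (fun σ : ι → Bool => σ α = true), g σ)
      = ∏ σ : ι → Bool, g σ := by
    intro g α
    rw [← Finset.prod_filter_mul_prod_filter_not univ (fun σ : ι → Bool => σ α = false) g]
    congr 1
    refine Finset.prod_congr ?_ fun _ _ => rfl
    ext σ; simp
  induction s using Finset.induction_on with
  | empty =>
      apply le_of_eq
      have h1 : ∀ σ : ι → Bool,
          (fun ω : ι → Bool => f (fun β => if β ∈ (∅ : Finset ι) then σ β else ω β)) = f := by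
        intro σ; funext ω
        have h2 : (fun β => if β ∈ (∅ : Finset ι) then σ β else ω β) = ω := by
          funext β; simp
        rw [h2]
      symm
      calc ∏ σ : ι → Bool, 
            ‖gowersAvg fun ω => f (fun β => if β ∈ (∅ : Finset ι) then σ β else ω β)‖
          = ∏ _σ : ι → Bool, ‖gowersAvg f‖ :=
            Finset.prod_congr rfl fun σ _ => by rw [h1 σ]
        _ = ‖gowersAvg f‖ ^ (2 ^ Fintype.card ι) := by
            rw [Finset.prod_const, Finset.card_univ, Fintype.card_fun, Fintype.card_bool]
  | @insert α s hα ih =>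
      have hc_upd : ∀ σ : ι → Bool,
          (fun ω : ι → Bool => f (fun β => if β ∈ s then Function.update σ α true β else ω β))
            = (fun ω : ι → Bool => f (fun β => if β ∈ s then σ β else ω β)) := by
        intro σ; funext ω
        have h2 : (fun β => if β ∈ s then Function.update σ α true β else ω β)
            = (fun β => if β ∈ s then σ β else ω β) := by
          funext β
          rcases eq_or_ne β α with rfl | hb
          · simp [hα]
          · rw [Function.update_of_ne hb]
        rw [h2]
      have hc0 : ∀ σ : ι → Bool, σ α = false →
          (fun ω : ι → Bool =>
              f (fun β => if β ∈ s then σ β else Function.update ω α false β))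
            = (fun ω : ι → Bool => f (fun β => if β ∈ insert α s then σ β else ω β)) := by
        intro σ hσ; funext ω
        have h2 : (fun β => if β ∈ s then σ β else Function.update ω α false β)
            = (fun β => if β ∈ insert α s then σ β else ω β) := by
          funext β
          rcases eq_or_ne β α with rfl | hb
          · simp [hα, hσ]
          · rcases em (β ∈ s) with hβ | hβ <;>
              simp [hβ, hb, Function.update_of_ne hb]
        rw [h2]
      have hc1 : ∀ σ : ι → Bool, σ α = false →
          (fun ω : ι → Bool =>
              f (fun β => if β ∈ s then σ β else Function.update ω α true β))
            = (fun ω : ι → Bool =>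
                f (fun β => if β ∈ insert α s then Function.update σ α true β else ω β)) := by
        intro σ hσ; funext ω
        have h2 : (fun β => if β ∈ s then σ β else Function.update ω α true β)
            = (fun β => if β ∈ insert α s then Function.update σ α true β else ω β) := by
          funext β
          rcases eq_or_ne β α with rfl | hb
          · simp [hα]
          · rcases em (β ∈ s) with hβ | hβ <;>
              simp [hβ, hb, Function.update_of_ne hb]
        rw [h2]
      refine le_trans ih ?_
      calc ∏ σ : ι → Bool,
            ‖gowersAvg fun ω => f (fun β => if β ∈ s then σ β else ω β)‖
          = (∏ σ ∈ univ.filter (fun σ : ι → Bool => σ α = false),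
              ‖gowersAvg fun ω => f (fun β => if β ∈ s then σ β else ω β)‖)
            * ∏ σ ∈ univ.filter (fun σ : ι → Bool => σ α = true),
              ‖gowersAvg fun ω => f (fun β => if β ∈ s then σ β else ω β)‖ :=
            (hsplit _ α).symm
        _ = ∏ σ ∈ univ.filter (fun σ : ι → Bool => σ α = false),
              ‖gowersAvg fun ω => f (fun β => if β ∈ s then σ β else ω β)‖ ^ 2 := by
            rw [← prod_filter_update_true α (fun σ =>
              ‖gowersAvg fun ω => f (fun β => if β ∈ s then σ β else ω β)‖)]
            rw [← Finset.prod_mul_distrib]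
            refine Finset.prod_congr rfl fun σ hσ => ?_
            rw [hc_upd σ, sq]
        _ ≤ ∏ σ ∈ univ.filter (fun σ : ι → Bool => σ α = false),
              (‖gowersAvg fun ω =>
                  f (fun β => if β ∈ insert α s then σ β else ω β)‖
                * ‖gowersAvg fun ω =>
                  f (fun β => if β ∈ insert α s then Function.update σ α true β else ω β)‖) := by
            refine Finset.prod_le_prod (fun σ _ => by positivity) fun σ hσ => ?_
            simp only [mem_filter, mem_univ, true_and] at hσ
            have h := cs_step (fun ω' : ι → Bool =>
              f (fun β => if β ∈ s then σ β else ω' β)) α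
            rw [show (fun ω : ι → Bool =>
                (fun ω' : ι → Bool => f (fun β => if β ∈ s then σ β else ω' β))
                  (Function.update ω α false)) = _ from hc0 σ hσ,
              show (fun ω : ι → Bool =>
                (fun ω' : ι → Bool => f (fun β => if β ∈ s then σ β else ω' β))
                  (Function.update ω α true)) = _ from hc1 σ hσ] at h
            exact h
        _ = ∏ σ : ι → Bool,
              ‖gowersAvg fun ω =>
                f (fun β => if β ∈ insert α s then σ β else ω β)‖ := by
            rw [Finset.prod_mul_distrib]
            rw [prod_filter_update_true α (fun σ =>
              ‖gowersAvg fun ω =>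
                f (fun β => if β ∈ insert α s then σ β else ω β)‖)]
            exact hsplit _ α

end GCS

/-- The Gowers–Cauchy–Schwarz inequality for box norms. -/
theorem gowers_cauchy_schwarz {ι : Type} [Fintype ι] [DecidableEq ι] [Nonempty ι]
    {X : ι → Type} [∀ α, Fintype (X α)] [∀ α, Nonempty (X α)]
    (f : (ι → Bool) → (∀ α, X α) → ℂ) :
    ‖gowersAvg f‖ ≤ ∏ ω : ι → Bool, boxNorm (f ω) := by
  classical
  have hkey := GCS.key f Finset.univ
  have hc : ∀ σ : ι → Bool,
      (fun ω : ι → Bool =>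
          f (fun β => if β ∈ (Finset.univ : Finset ι) then σ β else ω β))
        = (fun _ : ι → Bool => f σ) := by
    intro σ; funext ω
    have h2 : (fun β => if β ∈ (Finset.univ : Finset ι) then σ β else ω β) = σ := by
      funext β; simp
    rw [h2]
  rw [show (∏ σ : ι → Bool, ‖gowersAvg fun ω =>
        f (fun β => if β ∈ (Finset.univ : Finset ι) then σ β else ω β)‖)
      = ∏ σ : ι → Bool, ‖gowersAvg fun _ => f σ‖ from
      Finset.prod_congr rfl fun σ _ => by rw [hc σ]] at hkey
  have h2n : (0:ℝ) < (2:ℝ) ^ Fintype.card ι := by positivity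
  have hcast : ((2 ^ Fintype.card ι : ℕ) : ℝ) = (2:ℝ) ^ Fintype.card ι := by
    push_cast; ring
  have ha : (0:ℝ) ≤ ‖gowersAvg f‖ := norm_nonneg _
  have e1 : ‖gowersAvg f‖
      = (‖gowersAvg f‖ ^ (2 ^ Fintype.card ι : ℕ))
          ^ ((1:ℝ) / (2:ℝ) ^ Fintype.card ι) := by
    rw [← Real.rpow_natCast (‖gowersAvg f‖) (2 ^ Fintype.card ι),
      ← Real.rpow_mul ha, hcast, mul_one_div, div_self (ne_of_gt h2n), Real.rpow_one]
  rw [e1]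
  have hrhs : ∏ ω : ι → Bool, boxNorm (f ω)
      = (∏ σ : ι → Bool, ‖gowersAvg fun _ => f σ‖)
          ^ ((1:ℝ) / (2:ℝ) ^ Fintype.card ι) := by
    calc ∏ ω : ι → Bool, boxNorm (f ω)
        = ∏ σ : ι → Bool, ‖gowersAvg fun _ => f σ‖
            ^ ((1:ℝ) / (2:ℝ) ^ Fintype.card ι) :=
          Finset.prod_congr rfl fun σ _ => rfl
      _ = (∏ σ : ι → Bool, ‖gowersAvg fun _ => f σ‖)
            ^ ((1:ℝ) / (2:ℝ) ^ Fintype.card ι) :=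
          Real.finset_prod_rpow _ _ (fun σ _ => norm_nonneg _) _
  rw [hrhs]
  exact Real.rpow_le_rpow (pow_nonneg ha _) hkey (by positivity)
end

section
/- (Sieve factor computation) Let χ : R → R be a smooth, compactly supported function, and let φ be its modified Fourier transform, defined by e^x χ(x) = ∫_{−∞}^{∞} φ(ξ) e^{−ixξ} dξ. Then ∫_R (1 + iξ) φ(ξ) dξ = −χ'(0), and ∫_R ∫_R [(1+iξ)(1+iξ')/(2+i(ξ+ξ'))] φ(ξ) φ(ξ') dξ dξ' = ∫_0^∞ |χ'(x)|² dx. -/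
open MeasureTheory Set Filter Complex

lemma sieve_aux_ne₁ (ξ : ℝ) : (1 + Complex.I * (ξ:ℂ)) ≠ 0 := by
  intro h
  have := congrArg Complex.re h
  simp at this

lemma sieve_aux_ne₂ (ξ ξ' : ℝ) : (2 + Complex.I * ((ξ:ℂ) + (ξ':ℂ))) ≠ 0 := by
  intro h
  have := congrArg Complex.re h
  simp at this

lemma sieve_abs_exp (z : ℂ) : ‖Complex.exp z‖ = Real.exp z.re := Complex.norm_exp z

lemma sieve_integrableOn_cexp {c : ℂ} (hc : 0 < c.re) :
    IntegrableOn (fun x : ℝ => Complex.exp (-(c * x))) (Ioi 0) := by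
  refine (Integrable.mono' (g := fun x => Real.exp (-c.re * x))
    (exp_neg_integrableOn_Ioi 0 hc) ?_ ?_)
  · exact (Continuous.cexp (by continuity)).aestronglyMeasurable
  · filter_upwards with x
    rw [Complex.norm_exp]
    simp [neg_mul]

lemma sieve_hasDerivAt_cexp (c : ℂ) (x : ℝ) :
    HasDerivAt (fun x : ℝ => Complex.exp (-(c * x))) (-c * Complex.exp (-(c * x))) x := by
  have h1 : HasDerivAt (fun x : ℝ => ((x : ℂ))) 1 x := Complex.ofRealCLM.hasDerivAt
  have h2 : HasDerivAt (fun x : ℝ => -(c * (x:ℂ))) (-c) x := by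
    have := (h1.const_mul c).neg; rw [mul_one] at this; exact this
  simpa [mul_comm] using h2.cexp

lemma sieve_integral_cexp_Ioi {c : ℂ} (hc : 0 < c.re) :
    ∫ x : ℝ in Ioi 0, Complex.exp (-(c * x)) = 1 / c := by
  have hc0 : c ≠ 0 := fun h => by simp [h] at hc
  have key := integral_Ioi_of_hasDerivAt_of_tendsto' (a := 0) (m := 0)
    (f := fun x : ℝ => -Complex.exp (-(c * x)) / c)
    (f' := fun x : ℝ => Complex.exp (-(c * x)))
    (fun x _ => by
      simpa [neg_div, neg_neg, mul_comm, mul_div_assoc, mul_div_cancel_left₀ _ hc0]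
        using ((sieve_hasDerivAt_cexp c x).neg.div_const c))
    (sieve_integrableOn_cexp hc) ?_
  · rw [key]; simp [neg_div]
  · rw [tendsto_zero_iff_norm_tendsto_zero]
    have : Tendsto (fun x : ℝ => Real.exp (-c.re * x) / ‖c‖) atTop (nhds 0) := by
      rw [show (0:ℝ) = 0 / ‖c‖ by simp]
      exact (Real.tendsto_exp_atBot.comp (tendsto_id.const_mul_atTop_of_neg (by linarith))).div_const _
    refine this.congr' ?_
    filter_upwards with x
    simp [Complex.norm_exp, neg_mul]


/-- Sieve factor computation: if `χ : ℝ → ℝ` is smooth and compactly supported and `φ` is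
its modified Fourier transform, i.e. `e^x χ(x) = ∫ φ(ξ) e^{-ixξ} dξ`, then
`∫ (1+iξ) φ(ξ) dξ = -χ'(0)` and
`∫∫ (1+iξ)(1+iξ')/(2+i(ξ+ξ')) φ(ξ)φ(ξ') dξ dξ' = ∫_0^∞ |χ'(x)|² dx`. -/
theorem sieve_factor_computation (χ : ℝ → ℝ) (hχ : ContDiff ℝ (⊤ : ℕ∞) χ)
    (hsupp : HasCompactSupport χ) (φ : ℝ → ℂ)
    (hdecay : ∀ k : ℕ, Integrable (fun ξ : ℝ => |ξ| ^ k * ‖φ ξ‖))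
    (hφ : ∀ x : ℝ, ((Real.exp x * χ x : ℝ) : ℂ)
      = ∫ ξ : ℝ, φ ξ * Complex.exp (-(Complex.I * (x : ℂ) * (ξ : ℂ)))) :
    (∫ ξ : ℝ, (1 + Complex.I * (ξ : ℂ)) * φ ξ) = -((deriv χ 0 : ℝ) : ℂ)
    ∧ (∫ ξ : ℝ, ∫ ξ' : ℝ,
        ((1 + Complex.I * (ξ : ℂ)) * (1 + Complex.I * (ξ' : ℂ))
            / (2 + Complex.I * ((ξ : ℂ) + (ξ' : ℂ)))) * φ ξ * φ ξ')
      = ((∫ x in Set.Ioi (0 : ℝ), (deriv χ x) ^ 2 : ℝ) : ℂ) := by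
  by_cases hm : AEStronglyMeasurable φ volume
  · constructor
    · -- first identity
      -- integrability facts
      have habs0 : Integrable (fun ξ : ℝ => ‖φ ξ‖) := by
        simpa using hdecay 0
      have habs1 : Integrable (fun ξ : ℝ => |ξ| * ‖φ ξ‖) := by
        simpa using hdecay 1
      have hφint : Integrable φ := by
        rw [← integrable_norm_iff hm]
        exact habs0
      have hξφint : Integrable (fun ξ : ℝ => (Complex.I * (ξ:ℂ)) * φ ξ) := by
        refine Integrable.mono' habs1 ?_ ?_
        · exact ((continuous_const.mul Complex.continuous_ofReal).aestronglyMeasurable).mul hm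
        · filter_upwards with ξ
          simp [abs_mul, map_mul]
      have h1φint : Integrable (fun ξ : ℝ => (1 + Complex.I * (ξ:ℂ)) * φ ξ) := by
        have : (fun ξ : ℝ => (1 + Complex.I * (ξ:ℂ)) * φ ξ)
            = fun ξ : ℝ => φ ξ + (Complex.I * (ξ:ℂ)) * φ ξ := by
          funext ξ; ring
        rw [this]
        exact hφint.add hξφint
      have hχd : ∀ x : ℝ, HasDerivAt χ (deriv χ x) x :=
        fun x => ((hχ.differentiable (by simp)) x).hasDerivAt
      -- derivative of g at 0
      have key := hasDerivAt_integral_of_dominated_loc_of_deriv_le (μ := volume)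
        (x₀ := (0:ℝ)) (F := fun (x:ℝ) ξ => φ ξ * Complex.exp (-(Complex.I * (x:ℂ) * (ξ:ℂ))))
        (F' := fun (x:ℝ) ξ => φ ξ * (Complex.exp (-(Complex.I * (x:ℂ) * (ξ:ℂ))) * (-(Complex.I * (ξ:ℂ)))))
        (bound := fun ξ => |ξ| * ‖φ ξ‖) (Metric.ball_mem_nhds _ one_pos)
        ?_ ?_ ?_ ?_ habs1 ?_
      · obtain ⟨-, hder⟩ := key
        -- g equals x ↦ exp x * χ x
        have hg : (fun x : ℝ => ∫ ξ : ℝ, φ ξ * Complex.exp (-(Complex.I * (x:ℂ) * (ξ:ℂ))))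
            = fun x : ℝ => ((Real.exp x * χ x : ℝ) : ℂ) := by
          funext x; exact (hφ x).symm
        rw [hg] at hder
        have hder2 : HasDerivAt (fun x : ℝ => ((Real.exp x * χ x : ℝ) : ℂ))
            ((Real.exp 0 * χ 0 + Real.exp 0 * deriv χ 0 : ℝ) : ℂ) 0 := by
          exact (((Real.hasDerivAt_exp 0).mul (hχd 0)).ofReal_comp)
        have heq := hder.unique hder2
        have hsplit : (∫ ξ : ℝ, (1 + Complex.I * (ξ:ℂ)) * φ ξ)
            = (∫ ξ : ℝ, φ ξ) + ∫ ξ : ℝ, (Complex.I * (ξ:ℂ)) * φ ξ := by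
          rw [← integral_add hφint hξφint]
          congr 1; funext ξ; ring
        have hint0 : (∫ ξ : ℝ, φ ξ) = ((χ 0 : ℝ) : ℂ) := by
          have := hφ 0
          simp only [Complex.ofReal_zero, mul_zero, zero_mul, neg_zero, Complex.exp_zero,
            mul_one, Real.exp_zero, one_mul] at this
          exact this.symm
        have hintD : (∫ ξ : ℝ, φ ξ * (Complex.exp (-(Complex.I * ((0:ℝ):ℂ) * (ξ:ℂ))) * (-(Complex.I * (ξ:ℂ)))))
            = ((Real.exp 0 * χ 0 + Real.exp 0 * deriv χ 0 : ℝ) : ℂ) := heq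
        have hintD' : (∫ ξ : ℝ, (Complex.I * (ξ:ℂ)) * φ ξ)
            = -((Real.exp 0 * χ 0 + Real.exp 0 * deriv χ 0 : ℝ) : ℂ) := by
          rw [← hintD, ← integral_neg]
          congr 1; funext ξ
          simp only [Complex.ofReal_zero, mul_zero, zero_mul, neg_zero, Complex.exp_zero, one_mul]
          ring
        rw [hsplit, hint0, hintD']
        push_cast
        simp
      · filter_upwards with x
        exact hm.mul ((continuous_const.mul Complex.continuous_ofReal).neg.cexp).aestronglyMeasurable
      · rw [← integrable_norm_iff]
        · refine habs0.congr ?_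
          filter_upwards with ξ
          simp [Complex.norm_exp]
        · exact hm.mul ((continuous_const.mul Complex.continuous_ofReal).neg.cexp).aestronglyMeasurable
      · exact hm.mul (((continuous_const.mul Complex.continuous_ofReal).neg.cexp).mul
          (continuous_const.mul Complex.continuous_ofReal).neg).aestronglyMeasurable
      · filter_upwards with ξ
        intro x hx
        simp only [norm_mul, Complex.norm_exp, norm_neg,
          Complex.norm_I, Complex.norm_real, Real.norm_eq_abs]
        have hre : (-(Complex.I * (x:ℂ) * (ξ:ℂ))).re = 0 := by simp
        rw [hre, Real.exp_zero]
        nlinarith [norm_nonneg (φ ξ), abs_nonneg ξ]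
      · filter_upwards with ξ
        intro x hx
        have h1 : HasDerivAt (fun x : ℝ => -(Complex.I * (x:ℂ) * (ξ:ℂ))) (-(Complex.I * (ξ:ℂ))) x := by
          have : HasDerivAt (fun x : ℝ => ((x:ℂ))) 1 x := Complex.ofRealCLM.hasDerivAt
          have h := ((this.const_mul Complex.I).mul_const (ξ:ℂ)).neg; simp only [mul_one] at h; exact h
        simpa [mul_comm, mul_assoc, mul_left_comm] using (h1.cexp.const_mul (φ ξ))
    · -- second identity
      have habs0 : Integrable (fun ξ : ℝ => ‖φ ξ‖) := by simpa using hdecay 0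
      have habs1 : Integrable (fun ξ : ℝ => |ξ| * ‖φ ξ‖) := by simpa using hdecay 1
      have hbound1 : Integrable (fun ξ : ℝ => (1 + |ξ|) * ‖φ ξ‖) := by
        have := habs0.add habs1
        refine this.congr ?_
        filter_upwards with ξ
        simp only [Pi.add_apply]
        ring
      have hχd : ∀ x : ℝ, HasDerivAt χ (deriv χ x) x :=
        fun x => ((hχ.differentiable (by simp)) x).hasDerivAt
      have hnorm1 : ∀ ξ : ℝ, ‖(1 + Complex.I * (ξ:ℂ))‖ ≤ 1 + |ξ| := by
        intro ξ
        refine (norm_add_le _ _).trans ?_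
        simp
      have hcontA : Continuous (fun ξ : ℝ => 1 + Complex.I * (ξ:ℂ)) :=
        continuous_const.add (continuous_const.mul Complex.continuous_ofReal)
      -- ‖exp (-((1 + I ξ) x))‖ = exp (-x)
      have hnormexp : ∀ (ξ x : ℝ), ‖Complex.exp (-((1 + Complex.I * (ξ:ℂ)) * (x:ℂ)))‖ = Real.exp (-x) := by
        intro ξ x
        rw [Complex.norm_exp]
        congr 1
        simp [Complex.add_re, Complex.mul_re]
      -- G x = χ x
      have hG : ∀ x : ℝ, (∫ ξ : ℝ, φ ξ * Complex.exp (-((1 + Complex.I * (ξ:ℂ)) * (x:ℂ))))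
          = ((χ x : ℝ) : ℂ) := by
        intro x
        have hsplit : ∀ ξ : ℝ, φ ξ * Complex.exp (-((1 + Complex.I * (ξ:ℂ)) * (x:ℂ)))
            = Complex.exp (-(x:ℂ)) * (φ ξ * Complex.exp (-(Complex.I * (x:ℂ) * (ξ:ℂ)))) := by
          intro ξ
          rw [show -((1 + Complex.I * (ξ:ℂ)) * (x:ℂ)) = -(x:ℂ) + -(Complex.I * (x:ℂ) * (ξ:ℂ)) by ring,
            Complex.exp_add]
          ring
        rw [integral_congr_ae (Eventually.of_forall hsplit), integral_const_mul, ← hφ x]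
        rw [Complex.ofReal_mul, Complex.ofReal_exp, ← mul_assoc, ← Complex.exp_add]
        simp
      -- derivative: H x = -χ'(x)
      have hH : ∀ x : ℝ, (∫ ξ : ℝ, φ ξ * ((1 + Complex.I * (ξ:ℂ))
          * Complex.exp (-((1 + Complex.I * (ξ:ℂ)) * (x:ℂ))))) = -((deriv χ x : ℝ) : ℂ) := by
        intro x₀
        have hmeas : ∀ x : ℝ, AEStronglyMeasurable
            (fun ξ : ℝ => φ ξ * Complex.exp (-((1 + Complex.I * (ξ:ℂ)) * (x:ℂ)))) volume := by
          intro x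
          exact hm.mul ((hcontA.mul continuous_const).neg.cexp).aestronglyMeasurable
        have key := hasDerivAt_integral_of_dominated_loc_of_deriv_le (μ := volume)
          (x₀ := x₀)
          (F := fun (x:ℝ) ξ => φ ξ * Complex.exp (-((1 + Complex.I * (ξ:ℂ)) * (x:ℂ))))
          (F' := fun (x:ℝ) ξ => φ ξ * (Complex.exp (-((1 + Complex.I * (ξ:ℂ)) * (x:ℂ)))
            * (-(1 + Complex.I * (ξ:ℂ)))))
          (bound := fun ξ => Real.exp (|x₀| + 1) * ((1 + |ξ|) * ‖φ ξ‖)) (Metric.ball_mem_nhds _ one_pos)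
          (Eventually.of_forall hmeas) ?_ ?_ ?_ (hbound1.const_mul _) ?_
        · obtain ⟨-, hder⟩ := key
          have hgfun : (fun x : ℝ => ∫ ξ : ℝ, φ ξ * Complex.exp (-((1 + Complex.I * (ξ:ℂ)) * (x:ℂ))))
              = fun x : ℝ => ((χ x : ℝ) : ℂ) := funext hG
          rw [hgfun] at hder
          have heq := hder.unique ((hχd x₀).ofReal_comp)
          rw [← heq, ← integral_neg]
          refine integral_congr_ae (Eventually.of_forall fun ξ => ?_)
          ring
        · rw [← integrable_norm_iff (hmeas x₀)]
          refine (habs0.const_mul (Real.exp (-x₀))).mono' ?_ ?_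
          · exact (hmeas x₀).norm
          · filter_upwards with ξ
            rw [norm_norm, norm_mul, hnormexp]
            rw [mul_comm]
        · exact hm.mul (((hcontA.mul continuous_const).neg.cexp).mul hcontA.neg).aestronglyMeasurable
        · filter_upwards with ξ
          intro x hx
          rw [norm_mul, norm_mul, hnormexp, norm_neg]
          have h1 : ‖φ ξ‖ = ‖φ ξ‖ := rfl
          have hxb : |x| ≤ |x₀| + 1 := by
            rw [Metric.mem_ball, Real.dist_eq] at hx
            have := abs_sub_abs_le_abs_sub x x₀
            linarith
          have hexp : Real.exp (-x) ≤ Real.exp (|x₀| + 1) :=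
            Real.exp_le_exp.mpr (by cases abs_cases x with
              | inl h => linarith [h.1]
              | inr h => linarith [h.1])
          calc ‖φ ξ‖ * (Real.exp (-x) * ‖1 + Complex.I * (ξ:ℂ)‖)
              ≤ ‖φ ξ‖ * (Real.exp (|x₀| + 1) * (1 + |ξ|)) := by
                refine mul_le_mul_of_nonneg_left ?_ (norm_nonneg _)
                exact mul_le_mul hexp (hnorm1 ξ) (norm_nonneg _) (Real.exp_pos _).le
            _ = Real.exp (|x₀| + 1) * ((1 + |ξ|) * ‖φ ξ‖) := by rw [h1]; ring
        · filter_upwards with ξ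
          intro x hx
          have h1 : HasDerivAt (fun x : ℝ => -((1 + Complex.I * (ξ:ℂ)) * (x:ℂ)))
              (-(1 + Complex.I * (ξ:ℂ))) x := by
            have : HasDerivAt (fun x : ℝ => ((x:ℂ))) 1 x := Complex.ofRealCLM.hasDerivAt
            have h := (this.const_mul (1 + Complex.I * (ξ:ℂ))).neg; rw [mul_one] at h; exact h
          simpa using (h1.cexp.const_mul (φ ξ))
      -- the kernel identity
      have hK : ∀ ξ ξ' : ℝ, ((1 + Complex.I * (ξ : ℂ)) * (1 + Complex.I * (ξ' : ℂ))
            / (2 + Complex.I * ((ξ : ℂ) + (ξ' : ℂ))))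
          = ∫ x in Ioi (0:ℝ), ((1 + Complex.I * (ξ:ℂ)) * Complex.exp (-((1 + Complex.I * (ξ:ℂ)) * (x:ℂ))))
              * ((1 + Complex.I * (ξ':ℂ)) * Complex.exp (-((1 + Complex.I * (ξ':ℂ)) * (x:ℂ)))) := by
        intro ξ ξ'
        have hre : (0:ℝ) < (2 + Complex.I * ((ξ:ℂ) + (ξ':ℂ))).re := by
          simp [Complex.add_re, Complex.mul_re]
        have hrw : ∀ x : ℝ, ((1 + Complex.I * (ξ:ℂ)) * Complex.exp (-((1 + Complex.I * (ξ:ℂ)) * (x:ℂ))))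
              * ((1 + Complex.I * (ξ':ℂ)) * Complex.exp (-((1 + Complex.I * (ξ':ℂ)) * (x:ℂ))))
            = ((1 + Complex.I * (ξ:ℂ)) * (1 + Complex.I * (ξ':ℂ)))
              * Complex.exp (-((2 + Complex.I * ((ξ:ℂ) + (ξ':ℂ))) * (x:ℂ))) := by
          intro x
          rw [show -((2 + Complex.I * ((ξ:ℂ) + (ξ':ℂ))) * (x:ℂ))
              = -((1 + Complex.I * (ξ:ℂ)) * (x:ℂ)) + -((1 + Complex.I * (ξ':ℂ)) * (x:ℂ)) by ring,
            Complex.exp_add]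
          ring
        rw [integral_congr_ae (Eventually.of_forall hrw), integral_const_mul,
          sieve_integral_cexp_Ioi hre]
        rw [mul_one_div]
      -- bound for deriv χ
      obtain ⟨M, hM⟩ := (hχ.continuous_deriv (by simp)).bounded_above_of_compact_support hsupp.deriv
      have hexp2 : IntegrableOn (fun x : ℝ => Real.exp (-2 * x)) (Ioi 0) :=
        exp_neg_integrableOn_Ioi 0 two_pos
      have hexp1 : IntegrableOn (fun x : ℝ => Real.exp (-1 * x)) (Ioi 0) :=
        exp_neg_integrableOn_Ioi 0 one_pos
      have hcontP : ∀ ξ : ℝ, Continuous (fun x : ℝ =>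
          (1 + Complex.I * (ξ:ℂ)) * Complex.exp (-((1 + Complex.I * (ξ:ℂ)) * (x:ℂ)))) := by
        intro ξ
        exact continuous_const.mul ((continuous_const.mul Complex.continuous_ofReal).neg.cexp)
      -- step 1 : inner integral
      have step1 : ∀ ξ : ℝ, (∫ ξ' : ℝ,
            ((1 + Complex.I * (ξ : ℂ)) * (1 + Complex.I * (ξ' : ℂ))
                / (2 + Complex.I * ((ξ : ℂ) + (ξ' : ℂ)))) * φ ξ * φ ξ')
          = ∫ x in Ioi (0:ℝ),
              ((1 + Complex.I * (ξ:ℂ)) * Complex.exp (-((1 + Complex.I * (ξ:ℂ)) * (x:ℂ))) * φ ξ)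
                * (-((deriv χ x : ℝ) : ℂ)) := by
        intro ξ
        have e1 : ∀ ξ' : ℝ, ((1 + Complex.I * (ξ : ℂ)) * (1 + Complex.I * (ξ' : ℂ))
                / (2 + Complex.I * ((ξ : ℂ) + (ξ' : ℂ)))) * φ ξ * φ ξ'
            = ∫ x in Ioi (0:ℝ),
                ((1 + Complex.I * (ξ:ℂ)) * Complex.exp (-((1 + Complex.I * (ξ:ℂ)) * (x:ℂ))) * φ ξ)
                * ((1 + Complex.I * (ξ':ℂ)) * Complex.exp (-((1 + Complex.I * (ξ':ℂ)) * (x:ℂ))) * φ ξ') := by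
          intro ξ'
          rw [hK ξ ξ', ← integral_mul_const, ← integral_mul_const]
          refine integral_congr_ae (Eventually.of_forall fun x => ?_)
          ring
        rw [integral_congr_ae (Eventually.of_forall e1)]
        have hig : Integrable (Function.uncurry fun (ξ' x : ℝ) =>
            ((1 + Complex.I * (ξ:ℂ)) * Complex.exp (-((1 + Complex.I * (ξ:ℂ)) * (x:ℂ))) * φ ξ)
              * ((1 + Complex.I * (ξ':ℂ)) * Complex.exp (-((1 + Complex.I * (ξ':ℂ)) * (x:ℂ))) * φ ξ'))
            (volume.prod (volume.restrict (Ioi 0))) := by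
          have hbone : Integrable (fun p : ℝ × ℝ =>
              ((1 + |p.1|) * ‖φ p.1‖) * Real.exp (-2 * p.2))
              (volume.prod (volume.restrict (Ioi 0))) := Integrable.mul_prod hbound1 hexp2
          have hb := hbone.const_mul (‖1 + Complex.I * (ξ:ℂ)‖ * ‖φ ξ‖)
          have cA : Continuous (fun p : ℝ × ℝ => 1 + Complex.I * ((p.1:ℝ):ℂ)) :=
            continuous_const.add (continuous_const.mul (Complex.continuous_ofReal.comp continuous_fst))
          have cx : Continuous (fun p : ℝ × ℝ => ((p.2:ℝ):ℂ)) :=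
            Complex.continuous_ofReal.comp continuous_snd
          have hcont2 : Continuous (fun p : ℝ × ℝ =>
              ((1 + Complex.I * (ξ:ℂ)) * Complex.exp (-((1 + Complex.I * (ξ:ℂ)) * ((p.2:ℝ):ℂ))) * φ ξ)
                * ((1 + Complex.I * ((p.1:ℝ):ℂ)) * Complex.exp (-((1 + Complex.I * ((p.1:ℝ):ℂ)) * ((p.2:ℝ):ℂ))))) :=
            (((hcontP ξ).comp continuous_snd).mul continuous_const).mul
              (cA.mul ((cA.mul cx).neg.cexp))
          have hmeas2 : AEStronglyMeasurable (Function.uncurry fun (ξ' x : ℝ) =>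
              ((1 + Complex.I * (ξ:ℂ)) * Complex.exp (-((1 + Complex.I * (ξ:ℂ)) * (x:ℂ))) * φ ξ)
                * ((1 + Complex.I * (ξ':ℂ)) * Complex.exp (-((1 + Complex.I * (ξ':ℂ)) * (x:ℂ))) * φ ξ'))
              (volume.prod (volume.restrict (Ioi 0))) := by
            refine (hcont2.aestronglyMeasurable.mul hm.comp_fst).congr
              (Eventually.of_forall fun p => ?_)
            simp only [Function.uncurry, Pi.mul_apply]
            ring
          refine hb.mono' hmeas2 (Eventually.of_forall fun p => ?_)
          simp only [Function.uncurry, norm_mul, hnormexp]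
          have hexps : Real.exp (-2 * p.2) = Real.exp (-p.2) * Real.exp (-p.2) := by
            rw [← Real.exp_add]; ring_nf
          calc ‖1 + Complex.I*(ξ:ℂ)‖ * Real.exp (-p.2) * ‖φ ξ‖
                * (‖1 + Complex.I*((p.1:ℝ):ℂ)‖ * Real.exp (-p.2) * ‖φ p.1‖)
              ≤ ‖1 + Complex.I*(ξ:ℂ)‖ * Real.exp (-p.2) * ‖φ ξ‖
                * ((1 + |p.1|) * Real.exp (-p.2) * ‖φ p.1‖) := by
                gcongr
                exact hnorm1 p.1
            _ = ‖1 + Complex.I*(ξ:ℂ)‖ * ‖φ ξ‖ * ((1 + |p.1|) * ‖φ p.1‖ * Real.exp (-2*p.2)) := by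
                rw [hexps]; ring
        rw [integral_integral_swap hig]
        refine integral_congr_ae (Eventually.of_forall fun x => ?_)
        dsimp only
        rw [integral_const_mul]
        have : (∫ ξ' : ℝ, (1 + Complex.I * (ξ':ℂ)) * Complex.exp (-((1 + Complex.I * (ξ':ℂ)) * (x:ℂ))) * φ ξ')
            = -((deriv χ x : ℝ) : ℂ) := by
          rw [← hH x]
          refine integral_congr_ae (Eventually.of_forall fun ξ' => ?_)
          ring
        rw [this]
      -- apply step 1 under the outer integral
      rw [integral_congr_ae (Eventually.of_forall step1)]
      -- step 2 : swap the outer integral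
      have hig2 : Integrable (Function.uncurry fun (ξ x : ℝ) =>
          ((1 + Complex.I * (ξ:ℂ)) * Complex.exp (-((1 + Complex.I * (ξ:ℂ)) * (x:ℂ))) * φ ξ)
            * (-((deriv χ x : ℝ) : ℂ))) (volume.prod (volume.restrict (Ioi 0))) := by
        have hbone : Integrable (fun p : ℝ × ℝ =>
            ((1 + |p.1|) * ‖φ p.1‖) * (M * Real.exp (-1 * p.2)))
            (volume.prod (volume.restrict (Ioi 0))) :=
          Integrable.mul_prod hbound1 (hexp1.const_mul M)
        have cA : Continuous (fun p : ℝ × ℝ => 1 + Complex.I * ((p.1:ℝ):ℂ)) :=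
          continuous_const.add (continuous_const.mul (Complex.continuous_ofReal.comp continuous_fst))
        have cx : Continuous (fun p : ℝ × ℝ => ((p.2:ℝ):ℂ)) :=
          Complex.continuous_ofReal.comp continuous_snd
        have cχ : Continuous (fun p : ℝ × ℝ => -(((deriv χ p.2 : ℝ)) : ℂ)) :=
          (Complex.continuous_ofReal.comp ((hχ.continuous_deriv (by simp)).comp continuous_snd)).neg
        have hcont2 : Continuous (fun p : ℝ × ℝ =>
            ((1 + Complex.I * ((p.1:ℝ):ℂ)) * Complex.exp (-((1 + Complex.I * ((p.1:ℝ):ℂ)) * ((p.2:ℝ):ℂ))))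
              * (-(((deriv χ p.2 : ℝ)) : ℂ))) :=
          (cA.mul ((cA.mul cx).neg.cexp)).mul cχ
        have hmeas2 : AEStronglyMeasurable (Function.uncurry fun (ξ x : ℝ) =>
            ((1 + Complex.I * (ξ:ℂ)) * Complex.exp (-((1 + Complex.I * (ξ:ℂ)) * (x:ℂ))) * φ ξ)
              * (-((deriv χ x : ℝ) : ℂ))) (volume.prod (volume.restrict (Ioi 0))) := by
          refine (hcont2.aestronglyMeasurable.mul hm.comp_fst).congr
            (Eventually.of_forall fun p => ?_)
          simp only [Function.uncurry, Pi.mul_apply]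
          ring
        refine hbone.mono' hmeas2 (Eventually.of_forall fun p => ?_)
        simp only [Function.uncurry, norm_mul, hnormexp, norm_neg]
        have hχb : ‖((deriv χ p.2 : ℝ) : ℂ)‖ ≤ M := by
          rw [Complex.norm_real, Real.norm_eq_abs]
          exact hM p.2
        calc ‖1 + Complex.I*((p.1:ℝ):ℂ)‖ * Real.exp (-p.2) * ‖φ p.1‖ * ‖((deriv χ p.2 : ℝ) : ℂ)‖
            ≤ (1 + |p.1|) * Real.exp (-p.2) * ‖φ p.1‖ * M := by
              gcongr
              exact hnorm1 p.1
          _ = (1 + |p.1|) * ‖φ p.1‖ * (M * Real.exp (-1 * p.2)) := by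
              ring_nf
      rw [integral_integral_swap hig2]
      -- now compute the x-integral
      have step3 : ∀ x : ℝ, (∫ ξ : ℝ,
          ((1 + Complex.I * (ξ:ℂ)) * Complex.exp (-((1 + Complex.I * (ξ:ℂ)) * (x:ℂ))) * φ ξ)
            * (-((deriv χ x : ℝ) : ℂ)))
          = (((deriv χ x) ^ 2 : ℝ) : ℂ) := by
        intro x
        rw [integral_mul_const]
        have : (∫ ξ : ℝ, (1 + Complex.I * (ξ:ℂ)) * Complex.exp (-((1 + Complex.I * (ξ:ℂ)) * (x:ℂ))) * φ ξ)
            = -((deriv χ x : ℝ) : ℂ) := by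
          rw [← hH x]
          refine integral_congr_ae (Eventually.of_forall fun ξ => ?_)
          ring
        rw [this]
        push_cast
        ring
      rw [integral_congr_ae (Eventually.of_forall step3)]
      exact integral_ofReal
  · -- degenerate case: φ not a.e. strongly measurable
      have hz : ∀ x : ℝ, χ x = 0 := by
        intro x
        have hni : ¬ Integrable (fun ξ : ℝ => φ ξ * Complex.exp (-(Complex.I * (x:ℂ) * (ξ:ℂ)))) := by
          intro h
          apply hm
          have : φ = fun ξ : ℝ =>
              (φ ξ * Complex.exp (-(Complex.I * (x:ℂ) * (ξ:ℂ)))) * Complex.exp (Complex.I * (x:ℂ) * (ξ:ℂ)) := by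
            funext ξ
            rw [mul_assoc, ← Complex.exp_add]
            simp
          rw [this]
          exact h.aestronglyMeasurable.mul
            (Continuous.aestronglyMeasurable ((continuous_const.mul Complex.continuous_ofReal).cexp))
        have := hφ x
        rw [integral_undef hni] at this
        have h2 : Real.exp x * χ x = 0 := by exact_mod_cast this
        have := Real.exp_pos x
        nlinarith [sq_nonneg (χ x)]
      have hd : deriv χ = fun _ => 0 := by
        have : χ = fun _ => 0 := funext hz
        rw [this]; funext x; simp
      constructor
      · have hni : ¬ Integrable (fun ξ : ℝ => (1 + Complex.I * (ξ:ℂ)) * φ ξ) := by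
          intro h
          apply hm
          have : φ = fun ξ : ℝ => ((1 + Complex.I * (ξ:ℂ)) * φ ξ) * (1 + Complex.I * (ξ:ℂ))⁻¹ := by
            funext ξ
            field_simp [sieve_aux_ne₁ ξ]
          rw [this]
          refine h.aestronglyMeasurable.mul (Continuous.aestronglyMeasurable ?_)
          exact Continuous.inv₀
            (continuous_const.add (continuous_const.mul Complex.continuous_ofReal))
            (fun ξ => sieve_aux_ne₁ ξ)
        rw [integral_undef hni, hd]
        simp
      · have hinner : ∀ ξ : ℝ, (∫ ξ' : ℝ,
            ((1 + Complex.I * (ξ : ℂ)) * (1 + Complex.I * (ξ' : ℂ))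
                / (2 + Complex.I * ((ξ : ℂ) + (ξ' : ℂ)))) * φ ξ * φ ξ') = 0 := by
          intro ξ
          by_cases hξ : φ ξ = 0
          · simp [hξ]
          · apply integral_undef
            intro h
            apply hm
            have hK : ∀ ξ' : ℝ, ((1 + Complex.I * (ξ : ℂ)) * (1 + Complex.I * (ξ' : ℂ))
                / (2 + Complex.I * ((ξ : ℂ) + (ξ' : ℂ)))) * φ ξ ≠ 0 := by
              intro ξ'
              exact mul_ne_zero (div_ne_zero (mul_ne_zero (sieve_aux_ne₁ ξ) (sieve_aux_ne₁ ξ'))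
                (sieve_aux_ne₂ ξ ξ')) hξ
            have : φ = fun ξ' : ℝ => (((1 + Complex.I * (ξ : ℂ)) * (1 + Complex.I * (ξ' : ℂ))
                / (2 + Complex.I * ((ξ : ℂ) + (ξ' : ℂ)))) * φ ξ * φ ξ') *
                (((1 + Complex.I * (ξ : ℂ)) * (1 + Complex.I * (ξ' : ℂ))
                / (2 + Complex.I * ((ξ : ℂ) + (ξ' : ℂ)))) * φ ξ)⁻¹ := by
              funext ξ'
              rw [mul_comm _ (φ ξ'), mul_assoc, mul_inv_cancel₀ (hK ξ'), mul_one]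
            rw [this]
            refine h.aestronglyMeasurable.mul (Continuous.aestronglyMeasurable ?_)
            refine Continuous.inv₀ (Continuous.mul ?_ continuous_const) (fun ξ' => hK ξ')
            exact Continuous.div
              (continuous_const.mul (continuous_const.add (continuous_const.mul Complex.continuous_ofReal)))
              (continuous_const.add (continuous_const.mul (continuous_const.add Complex.continuous_ofReal)))
              (fun ξ' => sieve_aux_ne₂ ξ ξ')
        rw [hd]
        simp [hinner]
end
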